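/- arXiv:1308.2238 — 7 statements merged into one kernel-verified Lean document; each statement's English description precedes it below -/
import Mathlib

section
/- Let Σ be a simplicial fan in a lattice N whose support is a full-dimensional rational polyhedral cone C, with ray generators among v_1,…,v_n. Let A be the ring of Σ-piecewise polynomial functions on C. Then A is isomorphic as a ℂ-algebra to the quotient of the polynomial ring ℂ[D_1,…,D_n] by the monomial ideal generated by the products ∏_{i∈I} D_i over all subsets I of {1,…,n} that do not form a cone of Σ. -/
open scoped BigOperators

/-- The simplicial cone spanned by the vectors `v i`, `i ∈ I`. -/
def coneOf {n r : ℕ} (v : Fin n → (Fin r → ℝ)) (I : Finset (Fin n)) : Set (Fin r → ℝ) :=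
  {x | ∃ a : Fin n → ℝ, (∀ i, 0 ≤ a i) ∧ (∀ i ∉ I, a i = 0) ∧ x = ∑ i, a i • v i}

/-- The support `C` of the fan: the union of the cones of the simplicial complex `S`. -/
def fanSupport {n r : ℕ} (v : Fin n → (Fin r → ℝ)) (S : Finset (Finset (Fin n))) :
    Set (Fin r → ℝ) :=
  ⋃ I ∈ S, coneOf v I

/-- The ring `A` of `Σ`-piecewise polynomial functions on `C` (with values in `ℂ`):
functions on `C` that agree with a polynomial (evaluated at the real points) on each
cone of the fan. -/
def piecewisePoly {n r : ℕ} (v : Fin n → (Fin r → ℝ)) (S : Finset (Finset (Fin n))) :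
    Set ((fanSupport v S) → ℂ) :=
  {f | ∀ I ∈ S, ∃ p : MvPolynomial (Fin r) ℂ,
    ∀ x : fanSupport v S, (x : Fin r → ℝ) ∈ coneOf v I →
      f x = MvPolynomial.eval (fun k => ((x : Fin r → ℝ) k : ℂ)) p}

/-!
Write `D i` for the Courant functions: a point of the support has unique nonnegative coordinates
with respect to the generators of any cone containing it, and `D i` is the `i`-th one.
A polynomial `p` is killed by `X i ↦ D i` iff for every face `J` its restriction to `J`
(set `X i = 0` for `i ∉ J`) vanishes on the orthant `ℝ≥0^J`, i.e. iff every monomial supported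
on a face has coefficient zero, which is membership in the Stanley–Reisner ideal.
Conversely, the coordinates of a simplicial cone are linear functions, so on the face `J` a
piecewise polynomial `f` is a polynomial `P J` in the `X i` with `i ∈ J`. The `P J` are
compatible under restriction and glue, coefficient by coefficient, to one polynomial.
-/

open MvPolynomial

section FaceRestrict

variable {σ R : Type*} [CommSemiring R]

lemma eval_aeval {τ : Type*} (x : σ → R) (g : τ → MvPolynomial σ R) (p : MvPolynomial τ R) :
    eval x (aeval g p) = eval (fun i => eval x (g i)) p := by
  simp only [← coe_aeval_eq_eval]
  exact congrArg (· p) (comp_aeval g (aeval x))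

noncomputable def faceRestrict (J : Finset σ) : MvPolynomial σ R →ₐ[R] MvPolynomial σ R :=
  aeval ((J : Set σ).indicator X)

lemma eval_faceRestrict (J : Finset σ) (x : σ → R) (p : MvPolynomial σ R) :
    eval x (faceRestrict J p) = eval ((J : Set σ).indicator x) p := by
  rw [faceRestrict, eval_aeval]
  refine congrArg (eval · p) (funext fun i => ?_)
  by_cases hi : i ∈ J <;> simp [hi]

lemma eval_faceRestrict_of_eq_zero {J : Finset σ} {x : σ → R} (hx : ∀ i ∉ J, x i = 0)
    (p : MvPolynomial σ R) : eval x (faceRestrict J p) = eval x p := by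
  rw [eval_faceRestrict, Set.indicator_eq_self.2]
  exact fun i hi => by_contra fun hiJ => hi (hx i hiJ)

lemma faceRestrict_monomial [DecidableEq σ] (J : Finset σ) (m : σ →₀ ℕ) (c : R) :
    faceRestrict J (monomial m c) = if m.support ⊆ J then monomial m c else 0 := by
  rw [faceRestrict, aeval_monomial, monomial_eq, Finsupp.prod, Finsupp.prod]
  split_ifs with hm
  · congr 1
    exact Finset.prod_congr rfl fun i hi => by simp [hm hi]
  · obtain ⟨i, him, hiJ⟩ := Finset.not_subset.mp hm
    rw [Finset.prod_eq_zero him (by simp [hiJ, Finsupp.mem_support_iff.mp him]), mul_zero]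

lemma coeff_faceRestrict [DecidableEq σ] (J : Finset σ) (m : σ →₀ ℕ) (p : MvPolynomial σ R) :
    coeff m (faceRestrict J p) = if m.support ⊆ J then coeff m p else 0 := by
  induction p using MvPolynomial.induction_on' with
  | monomial d c =>
    rw [faceRestrict_monomial]
    by_cases hdm : d = m
    · subst hdm
      split_ifs <;> simp
    · split_ifs <;> simp [coeff_monomial, hdm]
  | add p q hp hq =>
    rw [map_add, coeff_add, coeff_add, hp, hq]
    split_ifs <;> simp

lemma faceRestrict_faceRestrict_of_subset {I J : Finset σ} (hIJ : I ⊆ J) (p : MvPolynomial σ R) :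
    faceRestrict I (faceRestrict J p) = faceRestrict I p := by
  classical
  ext m
  simp only [coeff_faceRestrict]
  split_ifs with hI hJ
  · rfl
  · exact absurd (hI.trans hIJ) hJ
  · rfl

lemma faceRestrict_idem (J : Finset σ) (p : MvPolynomial σ R) :
    faceRestrict J (faceRestrict J p) = faceRestrict J p :=
  faceRestrict_faceRestrict_of_subset subset_rfl p

end FaceRestrict

section StanleyReisner

variable {σ : Type*}

noncomputable def stanleyReisnerIdeal (R : Type*) [CommSemiring R] (S : Finset (Finset σ)) :
    Ideal (MvPolynomial σ R) :=
  Ideal.span ((fun I : Finset σ => ∏ i ∈ I, (X i : MvPolynomial σ R)) '' {I | I ∉ S})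

variable {R : Type*} [CommSemiring R] {S : Finset (Finset σ)}

lemma monomial_mem_stanleyReisnerIdeal {m : σ →₀ ℕ} (hm : m.support ∉ S) (c : R) :
    monomial m c ∈ stanleyReisnerIdeal R S := by
  refine Ideal.mem_of_dvd _ ?_ (Ideal.subset_span ⟨m.support, hm, rfl⟩)
  calc ∏ i ∈ m.support, (X i : MvPolynomial σ R)
      ∣ ∏ i ∈ m.support, X i ^ m i :=
        Finset.prod_dvd_prod_of_dvd _ _ fun i hi =>
          dvd_pow_self _ (Finsupp.mem_support_iff.mp hi)
    _ = monomial m 1 := prod_X_pow_eq_monomial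
    _ ∣ monomial m c := ⟨C c, by rw [mul_comm, C_mul_monomial, mul_one]⟩

lemma mem_stanleyReisnerIdeal_of_faceRestrict_eq_zero {p : MvPolynomial σ R}
    (hp : ∀ J ∈ S, faceRestrict J p = 0) : p ∈ stanleyReisnerIdeal R S := by
  classical
  rw [← support_sum_monomial_coeff p]
  refine Ideal.sum_mem _ fun m _ => ?_
  by_cases hm : m.support ∈ S
  · have hcoeff := coeff_faceRestrict m.support m p
    rw [if_pos subset_rfl, hp _ hm, coeff_zero] at hcoeff
    rw [← hcoeff, map_zero]
    exact Ideal.zero_mem _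
  · exact monomial_mem_stanleyReisnerIdeal hm _

lemma stanleyReisnerIdeal_le_ker_eval (hS : ∀ I ∈ S, ∀ J ⊆ I, J ∈ S) {J : Finset σ} (hJ : J ∈ S)
    {x : σ → R} (hx : ∀ i ∉ J, x i = 0) : stanleyReisnerIdeal R S ≤ RingHom.ker (eval x) := by
  rw [stanleyReisnerIdeal, Ideal.span_le]
  rintro _ ⟨I, hI, rfl⟩
  obtain ⟨i, hiI, hiJ⟩ := Finset.not_subset.mp fun hIJ => hI (hS J hJ I hIJ)
  simp [Finset.prod_eq_zero hiI (hx i hiJ)]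

/-- The glued polynomial has coefficient at `m` read off the face `m.support`. -/
lemma exists_faceRestrict_eq (hS : ∀ I ∈ S, ∀ J ⊆ I, J ∈ S) (P : Finset σ → MvPolynomial σ R)
    (hP : ∀ I ∈ S, ∀ J ∈ S, I ⊆ J → faceRestrict I (P J) = P I) :
    ∃ p : MvPolynomial σ R, ∀ J ∈ S, faceRestrict J p = P J := by
  classical
  let c : (σ →₀ ℕ) → R := fun m => if m.support ∈ S then coeff m (P m.support) else 0
  have hc : ∀ m, c m ≠ 0 → m ∈ S.biUnion fun I => (P I).support := fun m hm => by
    simp only [c, ne_eq, ite_eq_right_iff, not_forall] at hm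
    obtain ⟨hmS, hm⟩ := hm
    exact Finset.mem_biUnion.mpr ⟨_, hmS, mem_support_iff.mpr hm⟩
  refine ⟨AddMonoidAlgebra.ofCoeff (Finsupp.onFinset _ c hc), fun J hJ => ?_⟩
  ext m
  rw [coeff_faceRestrict]
  split_ifs with hmJ
  · have hmS : m.support ∈ S := hS J hJ _ hmJ
    change (if m.support ∈ S then _ else _) = _
    rw [if_pos hmS, ← hP _ hmS J hJ hmJ, coeff_faceRestrict, if_pos subset_rfl]
  · rw [← hP J hJ J hJ subset_rfl, coeff_faceRestrict, if_neg hmJ]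

end StanleyReisner

section RealPoints

variable {σ : Type*}

lemma eq_of_eval_ofReal_nonneg {p q : MvPolynomial σ ℂ}
    (h : ∀ a : σ → ℝ, (∀ i, 0 ≤ a i) → eval (Complex.ofReal ∘ a) p = eval (Complex.ofReal ∘ a) q) :
    p = q := by
  refine funext_set (fun _ => Complex.ofReal '' Set.Ici 0)
    (fun _ => (Set.Ici_infinite 0).image Complex.ofReal_injective.injOn) fun x hx => ?_
  choose a ha hxa using Set.mem_univ_pi.mp hx
  obtain rfl : x = Complex.ofReal ∘ a := funext fun i => (hxa i).symm
  exact h a ha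

lemma eq_of_eval_ofReal_eq_on_face {J : Finset σ} {p q : MvPolynomial σ ℂ}
    (hp : faceRestrict J p = p) (hq : faceRestrict J q = q)
    (h : ∀ a : σ → ℝ, (∀ i, 0 ≤ a i) → (∀ i ∉ J, a i = 0) →
      eval (Complex.ofReal ∘ a) p = eval (Complex.ofReal ∘ a) q) :
    p = q := by
  refine eq_of_eval_ofReal_nonneg fun a ha => ?_
  rw [← hp, ← hq, eval_faceRestrict, eval_faceRestrict,
    Set.indicator_comp_of_zero Complex.ofReal_zero]
  exact h _ (Set.indicator_nonneg fun i _ => ha i) fun i hi =>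
    Set.indicator_of_notMem (by simpa using hi) _

variable {τ : Type*} [Fintype σ] [DecidableEq σ]

noncomputable def linearPullback (L : (σ → ℝ) →ₗ[ℝ] (τ → ℝ)) :
    MvPolynomial τ ℂ →ₐ[ℂ] MvPolynomial σ ℂ :=
  aeval fun k => ∑ i, C (LinearMap.toMatrix' (R := ℝ) L k i : ℂ) * X i

lemma eval_linearPullback (L : (σ → ℝ) →ₗ[ℝ] (τ → ℝ)) (x : σ → ℝ) (q : MvPolynomial τ ℂ) :
    eval (Complex.ofReal ∘ x) (linearPullback L q) = eval (Complex.ofReal ∘ L x) q := by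
  rw [linearPullback, eval_aeval]
  refine congrArg (eval · q) (funext fun k => ?_)
  rw [Function.comp_apply, ← LinearMap.toMatrix'_mulVec L x]
  simp only [map_sum, map_mul, eval_C, eval_X, Function.comp_apply, Matrix.mulVec, dotProduct,
    Complex.ofReal_sum, Complex.ofReal_mul]

end RealPoints

section Fan

variable {n r : ℕ} {v : Fin n → (Fin r → ℝ)} {S : Finset (Finset (Fin n))}

lemma exists_linearMap_coeffs {I : Finset (Fin n)} (hI : LinearIndependent ℝ (fun i : I => v i)) :
    ∃ L : (Fin r → ℝ) →ₗ[ℝ] (Fin n → ℝ),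
      ∀ a : Fin n → ℝ, (∀ i ∉ I, a i = 0) → L (∑ i, a i • v i) = a := by
  obtain ⟨g, hg⟩ := (Fintype.linearCombination ℝ fun i : I => v i).exists_leftInverse_of_injective
    (LinearMap.ker_eq_bot.mpr (linearIndependent_iff_injective_fintypeLinearCombination.mp hI))
  refine ⟨LinearMap.pi (fun i => if hi : i ∈ I then LinearMap.proj ⟨i, hi⟩ else 0) ∘ₗ g,
    fun a ha => ?_⟩
  have hsum : ∑ i, a i • v i = Fintype.linearCombination ℝ (fun i : I => v i) (fun i => a i) := by
    rw [Fintype.linearCombination_apply, Finset.sum_coe_sort I fun i => a i • v i]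
    exact (Finset.sum_subset (Finset.subset_univ I) fun i _ hi => by simp [ha i hi]).symm
  rw [hsum, LinearMap.comp_apply, ← LinearMap.comp_apply g, hg, LinearMap.id_apply]
  funext i
  by_cases hi : i ∈ I <;> simp [hi, ha]

lemma eq_of_sum_smul_eq {I : Finset (Fin n)} (hI : LinearIndependent ℝ (fun i : I => v i))
    {a b : Fin n → ℝ} (ha : ∀ i ∉ I, a i = 0) (hb : ∀ i ∉ I, b i = 0)
    (h : ∑ i, a i • v i = ∑ i, b i • v i) : a = b := by
  obtain ⟨L, hL⟩ := exists_linearMap_coeffs hI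
  rw [← hL a ha, ← hL b hb, h]

lemma mem_fanSupport {J : Finset (Fin n)} (hJ : J ∈ S) {a : Fin n → ℝ} (ha0 : ∀ i, 0 ≤ a i)
    (haJ : ∀ i ∉ J, a i = 0) : ∑ i, a i • v i ∈ fanSupport v S :=
  Set.mem_biUnion hJ ⟨a, ha0, haJ, rfl⟩

lemma exists_fanCoords (x : fanSupport v S) :
    ∃ a : Fin n → ℝ, (∀ i, 0 ≤ a i) ∧ (∃ J ∈ S, ∀ i ∉ J, a i = 0) ∧
      (x : Fin r → ℝ) = ∑ i, a i • v i := by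
  obtain ⟨J, hJ, a, ha0, haJ, hx⟩ := Set.mem_iUnion₂.mp x.2
  exact ⟨a, ha0, ⟨J, hJ, haJ⟩, hx⟩

variable (v S) in
noncomputable def fanCoords (x : fanSupport v S) : Fin n → ℝ :=
  (exists_fanCoords x).choose

lemma fanCoords_spec (x : fanSupport v S) :
    (∀ i, 0 ≤ fanCoords v S x i) ∧ (∃ J ∈ S, ∀ i ∉ J, fanCoords v S x i = 0) ∧
      (x : Fin r → ℝ) = ∑ i, fanCoords v S x i • v i :=
  (exists_fanCoords x).choose_spec

/-- The cone coordinates of a point are unique: two cones containing it meet in a common face,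
on which the generators are independent. -/
lemma fanCoords_eq (hind : ∀ I ∈ S, LinearIndependent ℝ (fun i : I => v i))
    (hglue : ∀ I ∈ S, ∀ J ∈ S, coneOf v I ∩ coneOf v J = coneOf v (I ∩ J))
    {I : Finset (Fin n)} (hI : I ∈ S) (x : fanSupport v S)
    {a : Fin n → ℝ} (ha0 : ∀ i, 0 ≤ a i) (haI : ∀ i ∉ I, a i = 0)
    (hx : (x : Fin r → ℝ) = ∑ i, a i • v i) : fanCoords v S x = a := by
  obtain ⟨hb0, ⟨J, hJ, hbJ⟩, hbx⟩ := fanCoords_spec x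
  have hxIJ : (x : Fin r → ℝ) ∈ coneOf v I ∩ coneOf v J :=
    ⟨⟨a, ha0, haI, hx⟩, ⟨fanCoords v S x, hb0, hbJ, hbx⟩⟩
  rw [hglue I hI J hJ] at hxIJ
  obtain ⟨c, -, hcIJ, hcx⟩ := hxIJ
  have hcI : ∀ i ∉ I, c i = 0 := fun i hi => hcIJ i fun h => hi (Finset.mem_of_mem_inter_left h)
  have hcJ : ∀ i ∉ J, c i = 0 := fun i hi => hcIJ i fun h => hi (Finset.mem_of_mem_inter_right h)
  rw [eq_of_sum_smul_eq (hind J hJ) hbJ hcJ (hbx.symm.trans hcx),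
    eq_of_sum_smul_eq (hind I hI) haI hcI (hx.symm.trans hcx)]

variable (v S) in
noncomputable def courant (i : Fin n) (x : fanSupport v S) : ℂ :=
  fanCoords v S x i

lemma aeval_courant_apply (p : MvPolynomial (Fin n) ℂ) (x : fanSupport v S) :
    aeval (courant v S) p x = eval (Complex.ofReal ∘ fanCoords v S x) p := by
  change (Pi.evalAlgHom ℂ _ x).comp (aeval (courant v S)) p = _
  rw [comp_aeval, ← coe_aeval_eq_eval]
  rfl

lemma faceRestrict_eq_zero_of_aeval_courant_eq_zero
    (hind : ∀ I ∈ S, LinearIndependent ℝ (fun i : I => v i))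
    (hglue : ∀ I ∈ S, ∀ J ∈ S, coneOf v I ∩ coneOf v J = coneOf v (I ∩ J))
    {p : MvPolynomial (Fin n) ℂ} (hp : aeval (courant v S) p = 0)
    {J : Finset (Fin n)} (hJ : J ∈ S) : faceRestrict J p = 0 := by
  refine eq_of_eval_ofReal_eq_on_face (faceRestrict_idem J p) (map_zero _) fun a ha0 haJ => ?_
  have hx := mem_fanSupport (v := v) hJ ha0 haJ
  rw [eval_faceRestrict_of_eq_zero (fun i hi => by simp [haJ i hi]), map_zero,
    ← fanCoords_eq hind hglue hJ ⟨_, hx⟩ ha0 haJ rfl, ← aeval_courant_apply, hp]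
  rfl

lemma ker_aeval_courant (hdc : ∀ I ∈ S, ∀ J ⊆ I, J ∈ S)
    (hind : ∀ I ∈ S, LinearIndependent ℝ (fun i : I => v i))
    (hglue : ∀ I ∈ S, ∀ J ∈ S, coneOf v I ∩ coneOf v J = coneOf v (I ∩ J)) :
    RingHom.ker (aeval (courant v S)) = stanleyReisnerIdeal ℂ S := by
  refine le_antisymm (fun p hp => mem_stanleyReisnerIdeal_of_faceRestrict_eq_zero fun J hJ =>
    faceRestrict_eq_zero_of_aeval_courant_eq_zero hind hglue (RingHom.mem_ker.mp hp) hJ)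
    fun q hq => RingHom.mem_ker.mpr (funext fun x => ?_)
  obtain ⟨-, ⟨J, hJ, hxJ⟩, -⟩ := fanCoords_spec x
  rw [aeval_courant_apply]
  exact stanleyReisnerIdeal_le_ker_eval hdc hJ (fun i hi => by simp [hxJ i hi]) hq

lemma aeval_courant_mem_piecewisePoly (hind : ∀ I ∈ S, LinearIndependent ℝ (fun i : I => v i))
    (hglue : ∀ I ∈ S, ∀ J ∈ S, coneOf v I ∩ coneOf v J = coneOf v (I ∩ J))
    (p : MvPolynomial (Fin n) ℂ) : aeval (courant v S) p ∈ piecewisePoly v S := by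
  intro I hI
  obtain ⟨L, hL⟩ := exists_linearMap_coeffs (hind I hI)
  refine ⟨linearPullback L p, fun x ⟨a, ha0, haI, hxa⟩ => ?_⟩
  rw [aeval_courant_apply, fanCoords_eq hind hglue hI x ha0 haI hxa, ← hL a haI, ← hxa]
  exact (eval_linearPullback L x p).symm

lemma exists_facePoly_of_mem_piecewisePoly {f : fanSupport v S → ℂ} (hf : f ∈ piecewisePoly v S) :
    ∃ P : Finset (Fin n) → MvPolynomial (Fin n) ℂ, (∀ J ∈ S, faceRestrict J (P J) = P J) ∧
      ∀ J (hJ : J ∈ S) (a : Fin n → ℝ) (ha0 : ∀ i, 0 ≤ a i) (haJ : ∀ i ∉ J, a i = 0),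
        eval (Complex.ofReal ∘ a) (P J) = f ⟨_, mem_fanSupport hJ ha0 haJ⟩ := by
  choose q hq using hf
  refine ⟨fun J => if hJ : J ∈ S then
    faceRestrict J (linearPullback (Fintype.linearCombination ℝ v) (q J hJ)) else 0,
    fun J hJ => by simp only [dif_pos hJ, faceRestrict_idem], fun J hJ a ha0 haJ => ?_⟩
  simp only [dif_pos hJ]
  rw [eval_faceRestrict_of_eq_zero (fun i hi => by simp [haJ i hi]), eval_linearPullback,
    hq J hJ _ ⟨a, ha0, haJ, rfl⟩, Fintype.linearCombination_apply]
  rfl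

lemma exists_aeval_courant_eq (hdc : ∀ I ∈ S, ∀ J ⊆ I, J ∈ S) {f : fanSupport v S → ℂ}
    (hf : f ∈ piecewisePoly v S) :
    ∃ p : MvPolynomial (Fin n) ℂ, aeval (courant v S) p = f := by
  obtain ⟨P, hPJ, hPf⟩ := exists_facePoly_of_mem_piecewisePoly hf
  have hcompat : ∀ I ∈ S, ∀ J ∈ S, I ⊆ J → faceRestrict I (P J) = P I :=
    fun I hI J hJ hIJ => eq_of_eval_ofReal_eq_on_face (faceRestrict_idem I _) (hPJ I hI)
      fun a ha0 haI => by
        rw [eval_faceRestrict_of_eq_zero (fun i hi => by simp [haI i hi]),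
          hPf J hJ a ha0 fun i hi => haI i fun h => hi (hIJ h), hPf I hI a ha0 haI]
  obtain ⟨p, hp⟩ := exists_faceRestrict_eq hdc P hcompat
  refine ⟨p, funext fun x => ?_⟩
  obtain ⟨ha0, ⟨J, hJ, haJ⟩, hx⟩ := fanCoords_spec x
  rw [aeval_courant_apply, ← eval_faceRestrict_of_eq_zero (fun i hi => by simp [haJ i hi]),
    hp J hJ, hPf J hJ _ ha0 haJ]
  exact congrArg f (Subtype.ext hx.symm)

lemma range_aeval_courant (hdc : ∀ I ∈ S, ∀ J ⊆ I, J ∈ S)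
    (hind : ∀ I ∈ S, LinearIndependent ℝ (fun i : I => v i))
    (hglue : ∀ I ∈ S, ∀ J ∈ S, coneOf v I ∩ coneOf v J = coneOf v (I ∩ J)) :
    Set.range (aeval (R := ℂ) (courant v S)) = piecewisePoly v S :=
  (Set.range_subset_iff.mpr (aeval_courant_mem_piecewisePoly hind hglue)).antisymm
    fun _ hf => exists_aeval_courant_eq hdc hf

end Fan

theorem stmt0_general {n r : ℕ} (v : Fin n → (Fin r → ℝ)) (S : Finset (Finset (Fin n)))
    -- `S` is a simplicial complex
    (hdc : ∀ I ∈ S, ∀ J ⊆ I, J ∈ S)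
    -- the cones are simplicial
    (hind : ∀ I ∈ S, LinearIndependent ℝ (fun i : I => v i))
    -- the cones form a fan: they intersect along common faces
    (hglue : ∀ I ∈ S, ∀ J ∈ S, coneOf v I ∩ coneOf v J = coneOf v (I ∩ J)) :
    ∃ φ : (MvPolynomial (Fin n) ℂ ⧸
        Ideal.span ((fun I : Finset (Fin n) =>
          ∏ i ∈ I, (MvPolynomial.X i : MvPolynomial (Fin n) ℂ)) ''
          {I | I ∉ S})) →ₐ[ℂ] ((fanSupport v S) → ℂ),
      Function.Injective φ ∧ Set.range φ = piecewisePoly v S := by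
  change ∃ φ : (MvPolynomial (Fin n) ℂ ⧸ stanleyReisnerIdeal ℂ S) →ₐ[ℂ] (fanSupport v S → ℂ),
    Function.Injective φ ∧ Set.range φ = piecewisePoly v S
  rw [← ker_aeval_courant hdc hind hglue, ← range_aeval_courant hdc hind hglue]
  refine ⟨Ideal.kerLiftAlg _, Ideal.kerLiftAlg_injective _, ?_⟩
  rw [← Ideal.Quotient.mk_surjective.range_comp]
  rfl

/-- Stanley–Reisner presentation of piecewise polynomials: for a simplicial
fan `Σ` (given by a simplicial complex `S` on `{1,…,n}` and vectors `v i`) whose support is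
a full-dimensional cone `C`, the ring `A` of `Σ`-piecewise polynomial functions on `C` is
isomorphic as a `ℂ`-algebra to `ℂ[D₁,…,D_n] / (∏_{i∈I} D_i : I ∉ Σ)`. -/
theorem stmt0 {n r : ℕ} (v : Fin n → (Fin r → ℝ)) (S : Finset (Finset (Fin n)))
    -- `S` is a simplicial complex
    (hdc : ∀ I ∈ S, ∀ J ⊆ I, J ∈ S) (hne : ∅ ∈ S)
    -- the cones are simplicial
    (hind : ∀ I ∈ S, LinearIndependent ℝ (fun i : I => v i))
    -- the cones form a fan: they intersect along common faces
    (hglue : ∀ I ∈ S, ∀ J ∈ S, coneOf v I ∩ coneOf v J = coneOf v (I ∩ J))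
    -- the support is full-dimensional
    (hfull : ∃ I ∈ S, I.card = r) :
    ∃ φ : (MvPolynomial (Fin n) ℂ ⧸
        Ideal.span ((fun I : Finset (Fin n) =>
          ∏ i ∈ I, (MvPolynomial.X i : MvPolynomial (Fin n) ℂ)) ''
          {I | I ∉ S})) →ₐ[ℂ] ((fanSupport v S) → ℂ),
      Function.Injective φ ∧ Set.range φ = piecewisePoly v S :=
  stmt0_general v S hdc hind hglue
end

section
/- A nonzero monomial ∏_i D_i^{k_i} in the Stanley–Reisner ring A of the fan Σ lies in the ideal A^c of functions vanishing on ∂C if and only if its support {i : k_i > 0} is a cone of Σ whose relative interior is contained in the interior of C. -/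
open scoped BigOperators

/-- The relative interior of the simplicial cone spanned by `v i`, `i ∈ I`. -/
def coneRelInt {n r : ℕ} (v : Fin n → (Fin r → ℝ)) (I : Finset (Fin n)) :
    Set (Fin r → ℝ) :=
  {x | ∃ a : Fin n → ℝ, (∀ i ∈ I, 0 < a i) ∧ (∀ i ∉ I, a i = 0) ∧ x = ∑ i, a i • v i}

namespace Stmt2Aux


variable {n r : ℕ}

/-- The linear map sending coefficients to the corresponding combination. -/
def lmap (v : Fin n → (Fin r → ℝ)) : (Fin n → ℝ) →ₗ[ℝ] (Fin r → ℝ) where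
  toFun a := ∑ i, a i • v i
  map_add' a b := by
    simp [add_smul, Finset.sum_add_distrib]
  map_smul' c a := by
    simp [mul_smul, Finset.smul_sum]

lemma sum_supported (v : Fin n → (Fin r → ℝ)) {J : Finset (Fin n)} {a : Fin n → ℝ}
    (ha : ∀ i ∉ J, a i = 0) : ∑ i, a i • v i = ∑ i ∈ J, a i • v i :=
  (Finset.sum_subset (Finset.subset_univ J)
    (fun i _ hi => by rw [ha i hi, zero_smul])).symm

lemma coeff_unique {v : Fin n → (Fin r → ℝ)} {J : Finset (Fin n)}
    (hli : LinearIndependent ℝ (fun i : J => v i))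
    {a b : Fin n → ℝ} (ha : ∀ i ∉ J, a i = 0) (hb : ∀ i ∉ J, b i = 0)
    (heq : ∑ i, a i • v i = ∑ i, b i • v i) : a = b := by
  have key : ∀ i : J, a i - b i = 0 := by
    apply Fintype.linearIndependent_iff.mp hli (fun i : J => a i - b i)
    have : ∑ i : J, (a ↑i - b ↑i) • v ↑i = ∑ i ∈ J, (a i - b i) • v i :=
      Finset.sum_coe_sort J (fun i => (a i - b i) • v i)
    rw [this, ← sum_supported v (J := J) (a := fun i => a i - b i)
      (fun i hi => by show a i - b i = 0; rw [ha i hi, hb i hi, sub_zero])]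
    simp [sub_smul, Finset.sum_sub_distrib, heq]
  funext i
  by_cases hi : i ∈ J
  · have := key ⟨i, hi⟩
    simpa [sub_eq_zero] using this
  · rw [ha i hi, hb i hi]

lemma isClosed_coneOf {v : Fin n → (Fin r → ℝ)} {I : Finset (Fin n)}
    (hli : LinearIndependent ℝ (fun i : I => v i)) : IsClosed (coneOf v I) := by
  set W : Submodule ℝ (Fin n → ℝ) :=
    { carrier := {a | ∀ i ∉ I, a i = 0}
      add_mem' := fun {a b} ha hb i hi => by simp [ha i hi, hb i hi]
      zero_mem' := fun i hi => rfl
      smul_mem' := fun c {a} ha i hi => by simp [ha i hi] } with hW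
  set f : W →ₗ[ℝ] (Fin r → ℝ) := (lmap v).comp W.subtype with hf
  have hinj : Function.Injective f := by
    intro a b h
    apply Subtype.ext
    exact coeff_unique hli a.2 b.2 h
  have hemb : Topology.IsClosedEmbedding f :=
    LinearMap.isClosedEmbedding_of_injective (LinearMap.ker_eq_bot.mpr hinj)
  have hQ : IsClosed {a : W | ∀ i, 0 ≤ (a : Fin n → ℝ) i} := by
    have h1 : IsClosed {a : Fin n → ℝ | ∀ i, 0 ≤ a i} := by
      have : {a : Fin n → ℝ | ∀ i, 0 ≤ a i} = ⋂ i, {a : Fin n → ℝ | 0 ≤ a i} := by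
        ext a; simp [Set.mem_iInter]
      rw [this]
      exact isClosed_iInter fun i => isClosed_le continuous_const (continuous_apply i)
    exact h1.preimage continuous_subtype_val
  have himg : coneOf v I = f '' {a : W | ∀ i, 0 ≤ (a : Fin n → ℝ) i} := by
    ext x
    constructor
    · rintro ⟨a, ha0, hsupp, rfl⟩
      exact ⟨⟨a, hsupp⟩, ha0, rfl⟩
    · rintro ⟨⟨a, hsupp⟩, ha0, rfl⟩
      exact ⟨a, ha0, hsupp, rfl⟩
  rw [himg]
  exact hemb.isClosedMap _ hQ

lemma isClosed_fanSupport {v : Fin n → (Fin r → ℝ)} {S : Finset (Finset (Fin n))}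
    (hind : ∀ I ∈ S, LinearIndependent ℝ (fun i : I => v i)) :
    IsClosed (fanSupport v S) :=
  S.finite_toSet.isClosed_biUnion fun I hI => isClosed_coneOf (hind I hI)

lemma relint_subset_coneOf {v : Fin n → (Fin r → ℝ)} {J : Finset (Fin n)} :
    coneRelInt v J ⊆ coneOf v J := by
  rintro x ⟨a, hpos, hsupp, rfl⟩
  refine ⟨a, fun i => ?_, hsupp, rfl⟩
  by_cases hi : i ∈ J
  · exact (hpos i hi).le
  · exact (hsupp i hi).ge

lemma relint_not_mem {v : Fin n → (Fin r → ℝ)} {S : Finset (Finset (Fin n))}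
    (hind : ∀ I ∈ S, LinearIndependent ℝ (fun i : I => v i))
    (hglue : ∀ I ∈ S, ∀ J ∈ S, coneOf v I ∩ coneOf v J = coneOf v (I ∩ J))
    {J I : Finset (Fin n)} (hJ : J ∈ S) (hI : I ∈ S) (hnsub : ¬ J ⊆ I)
    {z : Fin r → ℝ} (hz : z ∈ coneRelInt v J) : z ∉ coneOf v I := by
  intro hmem
  obtain ⟨a, hpos, hsupp, hrep⟩ := hz
  have hz' : z ∈ coneOf v (I ∩ J) := by
    rw [← hglue I hI J hJ]
    exact ⟨hmem, relint_subset_coneOf ⟨a, hpos, hsupp, hrep⟩⟩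
  obtain ⟨c, hc0, hcsupp, hcrep⟩ := hz'
  have hcsuppJ : ∀ i ∉ J, c i = 0 := fun i hi =>
    hcsupp i (fun hmem' => hi (Finset.mem_of_mem_inter_right hmem'))
  have hac : a = c := coeff_unique (hind J hJ) hsupp hcsuppJ (hrep ▸ hcrep ▸ rfl)
  obtain ⟨j, hjJ, hjI⟩ := Finset.not_subset.mp hnsub
  have h1 : 0 < a j := hpos j hjJ
  have h2 : c j = 0 := hcsupp j (fun hmem' => hjI (Finset.mem_of_mem_inter_left hmem'))
  rw [hac, h2] at h1
  exact lt_irrefl 0 h1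

/-- The star of the cone `J`: union of all cones of the fan containing `J`. -/
def starU (v : Fin n → (Fin r → ℝ)) (S : Finset (Finset (Fin n))) (J : Finset (Fin n)) :
    Set (Fin r → ℝ) :=
  ⋃ I ∈ S.filter (fun I => J ⊆ I), coneOf v I

lemma starU_subset {v : Fin n → (Fin r → ℝ)} {S : Finset (Finset (Fin n))}
    {J : Finset (Fin n)} : starU v S J ⊆ fanSupport v S := by
  refine Set.iUnion₂_subset fun I hI => ?_
  exact Set.subset_biUnion_of_mem (Finset.mem_filter.mp hI).1

lemma mem_interior_starU {v : Fin n → (Fin r → ℝ)} {S : Finset (Finset (Fin n))}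
    (hind : ∀ I ∈ S, LinearIndependent ℝ (fun i : I => v i))
    (hglue : ∀ I ∈ S, ∀ J ∈ S, coneOf v I ∩ coneOf v J = coneOf v (I ∩ J))
    {J : Finset (Fin n)} (hJ : J ∈ S) {z : Fin r → ℝ} (hz : z ∈ coneRelInt v J)
    (hzint : z ∈ interior (fanSupport v S)) : z ∈ interior (starU v S J) := by
  set B : Set (Fin r → ℝ) := ⋃ I ∈ S.filter (fun I => ¬ J ⊆ I), coneOf v I with hB
  have hBclosed : IsClosed B :=
    (S.filter _).finite_toSet.isClosed_biUnion fun I hI =>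
      isClosed_coneOf (hind I (Finset.mem_filter.mp hI).1)
  have hzB : z ∉ B := by
    intro hmem
    simp only [hB, Set.mem_iUnion] at hmem
    obtain ⟨I, hI, hmem⟩ := hmem
    obtain ⟨hIS, hnsub⟩ := Finset.mem_filter.mp hI
    exact relint_not_mem hind hglue hJ hIS hnsub hz hmem
  have hopen : IsOpen (interior (fanSupport v S) \ B) :=
    isOpen_interior.sdiff hBclosed
  have hsub : interior (fanSupport v S) \ B ⊆ starU v S J := by
    rintro w ⟨hw1, hw2⟩
    have hwC : w ∈ fanSupport v S := interior_subset hw1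
    obtain ⟨I, hI, hw⟩ := Set.mem_iUnion₂.mp hwC
    by_cases hsub' : J ⊆ I
    · exact Set.mem_biUnion (Finset.mem_filter.mpr ⟨hI, hsub'⟩) hw
    · exact absurd (Set.mem_biUnion (Finset.mem_filter.mpr ⟨hI, hsub'⟩) hw) hw2
  exact interior_maximal hsub hopen ⟨hzint, hzB⟩

lemma relint_interior_mono {v : Fin n → (Fin r → ℝ)} {S : Finset (Finset (Fin n))}
    (hind : ∀ I ∈ S, LinearIndependent ℝ (fun i : I => v i))
    (hglue : ∀ I ∈ S, ∀ J ∈ S, coneOf v I ∩ coneOf v J = coneOf v (I ∩ J))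
    {J : Finset (Fin n)} (hJ : J ∈ S) {x z : Fin r → ℝ}
    (hx : x ∈ coneRelInt v J) (hz : z ∈ coneRelInt v J)
    (hzint : z ∈ interior (fanSupport v S)) : x ∈ interior (fanSupport v S) := by
  obtain ⟨a, hapos, hasupp, harep⟩ := hx
  obtain ⟨c, hcpos, hcsupp, hcrep⟩ := hz
  rcases J.eq_empty_or_nonempty with hJe | hJne
  · -- J = ∅, so x = z = 0
    subst hJe
    have hx0 : x = z := by
      rw [harep, hcrep]
      congr 1
      funext i
      rw [hasupp i (Finset.notMem_empty i), hcsupp i (Finset.notMem_empty i)]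
    rw [hx0]; exact hzint
  · obtain ⟨j₀, hj₀, hmin⟩ := J.exists_min_image (fun j => a j / c j) hJne
    set t : ℝ := a j₀ / c j₀ with ht
    have htpos : 0 < t := div_pos (hapos j₀ hj₀) (hcpos j₀ hj₀)
    set d : Fin n → ℝ := fun i => a i - t * c i with hd
    have hd0 : ∀ i, 0 ≤ d i := by
      intro i
      by_cases hi : i ∈ J
      · have h1 : t ≤ a i / c i := hmin i hi
        have h2 : 0 < c i := hcpos i hi
        have := (le_div_iff₀ h2).mp h1
        simp only [hd]; linarith
      · simp [hd, hasupp i hi, hcsupp i hi]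
    have hdsupp : ∀ i ∉ J, d i = 0 := by
      intro i hi
      simp only [hd, hasupp i hi, hcsupp i hi]; ring
    set w : Fin r → ℝ := ∑ i, d i • v i with hw
    have hxw : x = t • z + w := by
      rw [harep, hcrep, hw, Finset.smul_sum, ← Finset.sum_add_distrib]
      congr 1
      funext i
      rw [smul_smul, ← add_smul]
      congr 1
      simp only [hd]; ring
    -- affine image of the interior of the star
    have hzU : z ∈ interior (starU v S J) :=
      mem_interior_starU hind hglue hJ ⟨c, hcpos, hcsupp, hcrep⟩ hzint
    have hmap : IsOpenMap (fun u : Fin r → ℝ => t • u + w) := by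
      have h1 : IsOpenMap (fun u : Fin r → ℝ => t • u) := isOpenMap_smul₀ htpos.ne'
      have h2 : IsOpenMap (fun u : Fin r → ℝ => u + w) := isOpenMap_add_right w
      exact h2.comp h1
    have hopen : IsOpen ((fun u : Fin r → ℝ => t • u + w) '' interior (starU v S J)) :=
      hmap _ isOpen_interior
    have himg_sub : (fun u : Fin r → ℝ => t • u + w) '' interior (starU v S J) ⊆
        fanSupport v S := by
      rintro _ ⟨u, hu, rfl⟩
      have huU : u ∈ starU v S J := interior_subset hu
      obtain ⟨I, hI, hmemu⟩ := Set.mem_iUnion₂.mp huU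
      obtain ⟨hIS, hJI⟩ := Finset.mem_filter.mp hI
      obtain ⟨b, hb0, hbsupp, hbrep⟩ := hmemu
      refine Set.mem_biUnion hIS ⟨fun i => t * b i + d i, ?_, ?_, ?_⟩
      · intro i; have := hb0 i; have := hd0 i; positivity
      · intro i hi
        show t * b i + d i = 0
        rw [hbsupp i hi, hdsupp i (fun h => hi (hJI h))]
        ring
      · show t • u + w = ∑ i, (t * b i + d i) • v i
        rw [hbrep, hw, Finset.smul_sum, ← Finset.sum_add_distrib]
        congr 1
        funext i
        rw [smul_smul, ← add_smul]
    have hxmem : x ∈ (fun u : Fin r → ℝ => t • u + w) '' interior (starU v S J) :=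
      ⟨z, hzU, hxw.symm⟩
    exact interior_maximal himg_sub hopen hxmem

lemma exists_relint {v : Fin n → (Fin r → ℝ)} {S : Finset (Finset (Fin n))}
    (hdc : ∀ I ∈ S, ∀ J ⊆ I, J ∈ S) {x : Fin r → ℝ} (hx : x ∈ fanSupport v S) :
    ∃ J ∈ S, ∃ a : Fin n → ℝ, (∀ i ∈ J, 0 < a i) ∧ (∀ i ∉ J, a i = 0) ∧
      (∀ i, 0 ≤ a i) ∧ x = ∑ i, a i • v i := by
  obtain ⟨I, hI, a, ha0, hsupp, hrep⟩ := Set.mem_iUnion₂.mp hx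
  refine ⟨I.filter (fun i => 0 < a i), hdc I hI _ (Finset.filter_subset _ _), a, ?_, ?_, ha0, hrep⟩
  · intro i hi; exact (Finset.mem_filter.mp hi).2
  · intro i hi
    by_cases hiI : i ∈ I
    · by_contra h
      exact hi (Finset.mem_filter.mpr ⟨hiI, lt_of_le_of_ne (ha0 i) (Ne.symm h)⟩)
    · exact hsupp i hiI

end Stmt2Aux

/-- a nonzero monomial `∏_i D_i^{k_i}` in the Stanley–Reisner ring `A` of the
fan `Σ` (viewed as a piecewise polynomial function on `C` via the Courant functions `D_i`)
vanishes on the boundary `∂C` — i.e. lies in the ideal `A^c` — if and only if its support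
`{i : k_i > 0}` is a cone of `Σ` whose relative interior is contained in the interior of
`C`. -/
theorem stmt2 {n r : ℕ} (v : Fin n → (Fin r → ℝ)) (S : Finset (Finset (Fin n)))
    (hdc : ∀ I ∈ S, ∀ J ⊆ I, J ∈ S) (hne : ∅ ∈ S)
    (hind : ∀ I ∈ S, LinearIndependent ℝ (fun i : I => v i))
    (hglue : ∀ I ∈ S, ∀ J ∈ S, coneOf v I ∩ coneOf v J = coneOf v (I ∩ J))
    (hfull : ∃ I ∈ S, I.card = r)
    -- the Courant functions `D i`
    (D : Fin n → (fanSupport v S) → ℝ)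
    (hD : ∀ x : fanSupport v S, ∀ I ∈ S, ∀ a : Fin n → ℝ,
      (∀ i, 0 ≤ a i) → (∀ i ∉ I, a i = 0) → ((x : Fin r → ℝ) = ∑ i, a i • v i) →
      ∀ i, D i x = a i)
    (k : Fin n → ℕ)
    -- the monomial `∏ D_i^{k_i}` is nonzero as a function on `C`
    (hnz : ∃ x : fanSupport v S, ∏ i, (D i x) ^ (k i) ≠ 0) :
    (∀ x : fanSupport v S, (x : Fin r → ℝ) ∈ frontier (fanSupport v S) →
        ∏ i, (D i x) ^ (k i) = 0) ↔
      (Finset.univ.filter (fun i => 0 < k i)) ∈ S ∧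
        coneRelInt v (Finset.univ.filter (fun i => 0 < k i)) ⊆
          interior (fanSupport v S) := by
  classical
  set K := Finset.univ.filter (fun i => 0 < k i) with hK
  have hmemK : ∀ i, i ∈ K ↔ 0 < k i := by intro i; simp [hK]
  have hCclosed := Stmt2Aux.isClosed_fanSupport hind
  obtain ⟨x₀, hx₀⟩ := hnz
  obtain ⟨J₀, hJ₀S, a₀, ha₀pos, ha₀supp, ha₀0, ha₀rep⟩ := Stmt2Aux.exists_relint hdc x₀.2
  have hD₀ : ∀ i, D i x₀ = a₀ i := hD x₀ J₀ hJ₀S a₀ ha₀0 ha₀supp ha₀rep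
  have hKsubJ₀ : K ⊆ J₀ := by
    intro i hi
    by_contra hiJ
    have hz : a₀ i = 0 := ha₀supp i hiJ
    have hfac := Finset.prod_ne_zero_iff.mp hx₀ i (Finset.mem_univ i)
    rw [hD₀ i, hz] at hfac
    exact hfac (zero_pow ((hmemK i).mp hi).ne')
  have hKS : K ∈ S := hdc J₀ hJ₀S K hKsubJ₀
  constructor
  · intro hvan
    refine ⟨hKS, ?_⟩
    rintro x ⟨a, hapos, hasupp, harep⟩
    have ha0 : ∀ i, 0 ≤ a i := fun i => by
      by_cases hi : i ∈ K
      · exact (hapos i hi).le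
      · exact (hasupp i hi).ge
    have hxC : x ∈ fanSupport v S :=
      Set.mem_biUnion hKS ⟨a, ha0, hasupp, harep⟩
    by_contra hnint
    have hxfr : x ∈ frontier (fanSupport v S) := by
      rw [hCclosed.frontier_eq]; exact ⟨hxC, hnint⟩
    have h0 := hvan ⟨x, hxC⟩ hxfr
    have hDx : ∀ i, D i ⟨x, hxC⟩ = a i := hD ⟨x, hxC⟩ K hKS a ha0 hasupp harep
    have hne' : ∏ i, (D i ⟨x, hxC⟩) ^ k i ≠ 0 := by
      rw [Finset.prod_ne_zero_iff]
      intro i _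
      rw [hDx i]
      by_cases hi : i ∈ K
      · exact pow_ne_zero _ (hapos i hi).ne'
      · have hki : k i = 0 := by
          by_contra h
          exact hi ((hmemK i).mpr (Nat.pos_of_ne_zero h))
        rw [hki, pow_zero]; exact one_ne_zero
    exact hne' h0
  · rintro ⟨_, hsub⟩ x hxfr
    by_contra hne0
    obtain ⟨J, hJS, a, hapos, hasupp, ha0, harep⟩ := Stmt2Aux.exists_relint hdc x.2
    have hDx : ∀ i, D i x = a i := hD x J hJS a ha0 hasupp harep
    have hKsubJ : K ⊆ J := by
      intro i hi
      by_contra hiJ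
      have hz : a i = 0 := hasupp i hiJ
      have hfac := Finset.prod_ne_zero_iff.mp hne0 i (Finset.mem_univ i)
      rw [hDx i, hz] at hfac
      exact hfac (zero_pow ((hmemK i).mp hi).ne')
    set b : Fin n → ℝ := fun i => if i ∈ K then 1 else 0 with hb
    set y : Fin r → ℝ := ∑ i, b i • v i with hy
    have hyK : y ∈ coneRelInt v K := by
      refine ⟨b, ?_, ?_, hy⟩
      · intro i hi; show (0:ℝ) < if i ∈ K then 1 else 0; rw [if_pos hi]; norm_num
      · intro i hi; show (if i ∈ K then (1:ℝ) else 0) = 0; rw [if_neg hi]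
    have hyint : y ∈ interior (fanSupport v S) := hsub hyK
    have hcont : Continuous (fun t : ℝ => t • (x : Fin r → ℝ) + y) :=
      (continuous_id.smul continuous_const).add continuous_const
    have h0mem : (0:ℝ) ∈ (fun t : ℝ => t • (x : Fin r → ℝ) + y) ⁻¹' interior (fanSupport v S) := by
      simp [hyint]
    have hopen : IsOpen ((fun t : ℝ => t • (x : Fin r → ℝ) + y) ⁻¹' interior (fanSupport v S)) :=
      isOpen_interior.preimage hcont
    obtain ⟨ε, hε, hball⟩ := Metric.isOpen_iff.mp hopen 0 h0mem
    have htpos : 0 < ε / 2 := by positivity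
    have htball : ε / 2 ∈ Metric.ball (0:ℝ) ε := by
      rw [Metric.mem_ball, Real.dist_eq, sub_zero, abs_of_pos htpos]; linarith
    have hzint : (ε / 2) • (x : Fin r → ℝ) + y ∈ interior (fanSupport v S) := hball htball
    have hzJ : (ε / 2) • (x : Fin r → ℝ) + y ∈ coneRelInt v J := by
      refine ⟨fun i => (ε / 2) * a i + b i, ?_, ?_, ?_⟩
      · intro i hi
        have h1 : 0 < (ε / 2) * a i := mul_pos htpos (hapos i hi)
        have h2 : 0 ≤ b i := by
          by_cases h : i ∈ K
          · show (0:ℝ) ≤ if i ∈ K then 1 else 0; rw [if_pos h]; norm_num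
          · show (0:ℝ) ≤ if i ∈ K then 1 else 0; rw [if_neg h]
        show 0 < (ε / 2) * a i + b i
        linarith
      · intro i hi
        have hiK : i ∉ K := fun h => hi (hKsubJ h)
        show (ε / 2) * a i + b i = 0
        rw [hasupp i hi]
        show (ε/2) * 0 + (if i ∈ K then (1:ℝ) else 0) = 0
        rw [if_neg hiK]; ring
      · rw [harep, hy, Finset.smul_sum, ← Finset.sum_add_distrib]
        congr 1; funext i; rw [smul_smul, ← add_smul]
    have hxJ : (x : Fin r → ℝ) ∈ coneRelInt v J := ⟨a, hapos, hasupp, harep⟩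
    have hxint := Stmt2Aux.relint_interior_mono hind hglue hJS hxJ hzJ hzint
    rw [hCclosed.frontier_eq] at hxfr
    exact hxfr.2 hxint
end

section
/- With the integration map ∫ defined by ∫ f = (∑_{|J|=rk N} (1/|Vol(J)|) f_J ∏_{i∈J} 1/u_{i,J})(0) on piecewise polynomial functions vanishing on ∂C, one has ∫ (f·g) = g(0)·∫ f for any global polynomial function g on N. -/
/-!
Off the hyperplanes `u_{i,J} = 0` the summand of the rational sum for `f·g` is `g(x)` times the
summand for `f`, so the polynomials `Q` and `g·P` agree off the zero locus of the nonzero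
polynomial `∏_{J,i} u_{i,J}`. Over the infinite domain `ℂ` this forces `Q = g·P`, and
evaluating at `0` gives the claim.
-/

open scoped BigOperators

namespace LinearMap

variable {R σ : Type*} [CommSemiring R] [Fintype σ] [DecidableEq σ]

noncomputable def formToMvPolynomial (φ : (σ → R) →ₗ[R] R) : MvPolynomial σ R :=
  ∑ k, MvPolynomial.C (φ (Pi.single k 1)) * MvPolynomial.X k

@[simp]
theorem eval_formToMvPolynomial (φ : (σ → R) →ₗ[R] R) (x : σ → R) :
    MvPolynomial.eval x φ.formToMvPolynomial = φ x := by
  conv_rhs => rw [pi_eq_sum_univ' x]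
  simp [formToMvPolynomial, mul_comm]

theorem formToMvPolynomial_ne_zero {φ : (σ → R) →ₗ[R] R} (hφ : φ ≠ 0) : φ.formToMvPolynomial ≠ 0 :=
  fun h => hφ <| LinearMap.ext fun x => by simpa [h] using (eval_formToMvPolynomial φ x).symm

end LinearMap

namespace MvPolynomial

theorem funext_of_eval_ne_zero {R σ : Type*} [CommRing R] [IsDomain R] [Infinite R]
    {p q h : MvPolynomial σ R} (hh : h ≠ 0) (H : ∀ x, eval x h ≠ 0 → eval x p = eval x q) :
    p = q := by
  have hmul : h * (p - q) = 0 := MvPolynomial.funext fun x => by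
    by_cases hx : eval x h = 0
    · simp [hx]
    · simp [H x hx]
  exact sub_eq_zero.1 ((mul_eq_zero.1 hmul).resolve_left hh)

end MvPolynomial

theorem stmt4_general {n r : ℕ} (v : Fin n → (Fin r → ℝ)) (S : Finset (Finset (Fin n)))
    (u : Fin n → Finset (Fin n) → ((Fin r → ℂ) →ₗ[ℂ] ℂ))
    (hu : ∀ J ∈ S, J.card = r → ∀ i ∈ J, ∀ j ∈ J,
      u i J (fun k => ((v j k : ℝ) : ℂ)) = if i = j then 1 else 0)
    (Vol : Finset (Fin n) → ℝ)
    (f : Finset (Fin n) → MvPolynomial (Fin r) ℂ)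
    -- a global polynomial `g`
    (g : MvPolynomial (Fin r) ℂ)
    -- `P` represents the rational sum defining `∫ f`
    (P : MvPolynomial (Fin r) ℂ)
    (hP : ∀ x : Fin r → ℂ,
      (∀ J ∈ S.filter (fun J => J.card = r), ∀ i ∈ J, u i J x ≠ 0) →
      ∑ J ∈ S.filter (fun J => J.card = r),
        ((Vol J : ℂ))⁻¹ * MvPolynomial.eval x (f J) * ∏ i ∈ J, (u i J x)⁻¹ =
        MvPolynomial.eval x P)
    -- `Q` represents the rational sum defining `∫ (f·g)`
    (Q : MvPolynomial (Fin r) ℂ)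
    (hQ : ∀ x : Fin r → ℂ,
      (∀ J ∈ S.filter (fun J => J.card = r), ∀ i ∈ J, u i J x ≠ 0) →
      ∑ J ∈ S.filter (fun J => J.card = r),
        ((Vol J : ℂ))⁻¹ * MvPolynomial.eval x (f J * g) * ∏ i ∈ J, (u i J x)⁻¹ =
        MvPolynomial.eval x Q) :
    MvPolynomial.eval (0 : Fin r → ℂ) Q =
      MvPolynomial.eval (0 : Fin r → ℂ) g * MvPolynomial.eval (0 : Fin r → ℂ) P := by
  set T := S.filter (fun J => J.card = r)
  -- the common denominator of the rational sums
  let D : MvPolynomial (Fin r) ℂ := ∏ J ∈ T, ∏ i ∈ J, (u i J).formToMvPolynomial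
  have hD : D ≠ 0 := by
    simp only [D, Finset.prod_ne_zero_iff]
    intro J hJ i hi
    rw [Finset.mem_filter] at hJ
    refine LinearMap.formToMvPolynomial_ne_zero fun h0 => ?_
    simpa [h0] using hu J hJ.1 hJ.2 i hi i hi
  have hQP : Q = g * P := by
    refine MvPolynomial.funext_of_eval_ne_zero hD fun x hx => ?_
    have hx' : ∀ J ∈ T, ∀ i ∈ J, u i J x ≠ 0 := by
      simpa [D, Finset.prod_ne_zero_iff] using hx
    rw [← hQ x hx', map_mul, ← hP x hx', Finset.mul_sum]
    refine Finset.sum_congr rfl fun J _ => ?_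
    rw [map_mul]
    ring
  rw [hQP, map_mul]

/-- the integration map `∫ f = (∑_{|J|=r} (1/|Vol(J)|) f_J ∏_{i∈J} u_{i,J}⁻¹)(0)`
on piecewise polynomial functions `f` vanishing on `∂C` satisfies `∫(f·g) = g(0)·∫f` for
every global polynomial `g`.  Here `P` (resp. `Q`) is a polynomial representing the
defining rational sum for `f` (resp. for `f·g`) away from the pole locus, and the
conclusion is `Q(0) = g(0)·P(0)`. -/
theorem stmt4 {n r : ℕ} (v : Fin n → (Fin r → ℝ)) (S : Finset (Finset (Fin n)))
    (hdc : ∀ I ∈ S, ∀ J ⊆ I, J ∈ S)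
    (hind : ∀ I ∈ S, LinearIndependent ℝ (fun i : I => v i))
    (hglue : ∀ I ∈ S, ∀ J ∈ S, coneOf v I ∩ coneOf v J = coneOf v (I ∩ J))
    (hmax : ∀ I ∈ S, ∃ J ∈ S, I ⊆ J ∧ J.card = r)
    (hfull : ∃ I ∈ S, I.card = r)
    (u : Fin n → Finset (Fin n) → ((Fin r → ℂ) →ₗ[ℂ] ℂ))
    (hu : ∀ J ∈ S, J.card = r → ∀ i ∈ J, ∀ j ∈ J,
      u i J (fun k => ((v j k : ℝ) : ℂ)) = if i = j then 1 else 0)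
    (Vol : Finset (Fin n) → ℝ)
    (hVol : ∀ J ∈ S, J.card = r → ∀ e : Fin r → Fin n, Function.Injective e →
      (∀ a, e a ∈ J) → Vol J = |Matrix.det (Matrix.of fun a b => v (e b) a)|)
    -- `f` is piecewise polynomial and vanishes on the boundary of `C`
    (f : Finset (Fin n) → MvPolynomial (Fin r) ℂ)
    (hf : ∀ J ∈ S, ∀ K ∈ S, J.card = r → K.card = r →
      ∀ x ∈ coneOf v J ∩ coneOf v K,
        MvPolynomial.eval (fun k => ((x k : ℝ) : ℂ)) (f J) =
        MvPolynomial.eval (fun k => ((x k : ℝ) : ℂ)) (f K))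
    (hbd : ∀ J ∈ S, J.card = r → ∀ x ∈ coneOf v J ∩ frontier (fanSupport v S),
      MvPolynomial.eval (fun k => ((x k : ℝ) : ℂ)) (f J) = 0)
    -- a global polynomial `g`
    (g : MvPolynomial (Fin r) ℂ)
    -- `P` represents the rational sum defining `∫ f`
    (P : MvPolynomial (Fin r) ℂ)
    (hP : ∀ x : Fin r → ℂ,
      (∀ J ∈ S.filter (fun J => J.card = r), ∀ i ∈ J, u i J x ≠ 0) →
      ∑ J ∈ S.filter (fun J => J.card = r),
        ((Vol J : ℂ))⁻¹ * MvPolynomial.eval x (f J) * ∏ i ∈ J, (u i J x)⁻¹ =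
        MvPolynomial.eval x P)
    -- `Q` represents the rational sum defining `∫ (f·g)`
    (Q : MvPolynomial (Fin r) ℂ)
    (hQ : ∀ x : Fin r → ℂ,
      (∀ J ∈ S.filter (fun J => J.card = r), ∀ i ∈ J, u i J x ≠ 0) →
      ∑ J ∈ S.filter (fun J => J.card = r),
        ((Vol J : ℂ))⁻¹ * MvPolynomial.eval x (f J * g) * ∏ i ∈ J, (u i J x)⁻¹ =
        MvPolynomial.eval x Q) :
    MvPolynomial.eval (0 : Fin r → ℂ) Q =
      MvPolynomial.eval (0 : Fin r → ℂ) g * MvPolynomial.eval (0 : Fin r → ℂ) P :=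
  stmt4_general v S u hu Vol f g P hP Q hQ
end

section
/- Let λ ∈ ℂ* act on N_ℂ by scaling. Then the integration map ∫ on A^c satisfies ∫(f ∘ λ) = λ^{rk N} ∫ f; consequently ∫ vanishes on all graded components of A^c/Z·A^c except the top degree component, where Z is the ideal generated by global linear functions. -/
open scoped BigOperators

open MvPolynomial in
lemma homog_eval_mul {r d : ℕ} {p : MvPolynomial (Fin r) ℂ} (hp : p.IsHomogeneous d)
    (c : ℂ) (x : Fin r → ℂ) :
    MvPolynomial.eval (fun k => c * x k) p = c ^ d * MvPolynomial.eval x p := by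
  rw [eval_eq', eval_eq', Finset.mul_sum]
  refine Finset.sum_congr rfl fun m hm => ?_
  have hdeg : ∑ i, m i = d := by
    have h := hp (mem_support_iff.mp hm)
    simp only [Finsupp.weight_apply, Pi.one_apply, smul_eq_mul, mul_one, Finsupp.sum] at h
    rw [← h]
    exact (Finset.sum_subset (Finset.subset_univ _) fun i _ hi => by
      simpa using Finsupp.notMem_support_iff.mp hi).symm
  calc MvPolynomial.coeff m p * ∏ i, (c * x i) ^ m i
      = MvPolynomial.coeff m p * ((∏ i, c ^ m i) * ∏ i, x i ^ m i) := by
        simp [mul_pow, Finset.prod_mul_distrib]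
    _ = c ^ d * (MvPolynomial.coeff m p * ∏ i, x i ^ m i) := by
        rw [Finset.prod_pow_eq_pow_sum, hdeg]; ring

open MvPolynomial in
lemma lin_poly_eval {r : ℕ} (u : (Fin r → ℂ) →ₗ[ℂ] ℂ) (x : Fin r → ℂ) :
    MvPolynomial.eval x (∑ k, MvPolynomial.C (u (Pi.single k 1)) * MvPolynomial.X k) = u x := by
  rw [LinearMap.pi_apply_eq_sum_univ]
  simp only [map_sum, map_mul, eval_C, eval_X, smul_eq_mul]
  refine Finset.sum_congr rfl fun k _ => ?_
  have hs : (Pi.single k 1 : Fin r → ℂ) = fun j => if k = j then 1 else 0 := by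
    ext j; simp [Pi.single_apply, eq_comm]
  rw [hs, mul_comm]

/-- the integration map `∫` on `A^c` (defined as the value at `0` of the
polynomial representing `∑_{|J|=r} (1/|Vol(J)|) f_J ∏_{i∈J} u_{i,J}⁻¹`) satisfies
`∫(f ∘ λ) = λ^{rk N}·∫f` for every scaling `λ ∈ ℂ*`; consequently `∫` vanishes on every
homogeneous component of `A^c` except the one of top degree `r = rk N`. -/
theorem stmt5 {n r : ℕ} (v : Fin n → (Fin r → ℝ)) (S : Finset (Finset (Fin n)))
    (hdc : ∀ I ∈ S, ∀ J ⊆ I, J ∈ S)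
    (hind : ∀ I ∈ S, LinearIndependent ℝ (fun i : I => v i))
    (hglue : ∀ I ∈ S, ∀ J ∈ S, coneOf v I ∩ coneOf v J = coneOf v (I ∩ J))
    (hmax : ∀ I ∈ S, ∃ J ∈ S, I ⊆ J ∧ J.card = r)
    (hfull : ∃ I ∈ S, I.card = r)
    (u : Fin n → Finset (Fin n) → ((Fin r → ℂ) →ₗ[ℂ] ℂ))
    (hu : ∀ J ∈ S, J.card = r → ∀ i ∈ J, ∀ j ∈ J,
      u i J (fun k => ((v j k : ℝ) : ℂ)) = if i = j then 1 else 0)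
    (Vol : Finset (Fin n) → ℝ)
    (hVol : ∀ J ∈ S, J.card = r → ∀ e : Fin r → Fin n, Function.Injective e →
      (∀ a, e a ∈ J) → Vol J = |Matrix.det (Matrix.of fun a b => v (e b) a)|)
    -- `f` is piecewise polynomial and vanishes on the boundary of `C`
    (f : Finset (Fin n) → MvPolynomial (Fin r) ℂ)
    (hf : ∀ J ∈ S, ∀ K ∈ S, J.card = r → K.card = r →
      ∀ x ∈ coneOf v J ∩ coneOf v K,
        MvPolynomial.eval (fun k => ((x k : ℝ) : ℂ)) (f J) =
        MvPolynomial.eval (fun k => ((x k : ℝ) : ℂ)) (f K))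
    (hbd : ∀ J ∈ S, J.card = r → ∀ x ∈ coneOf v J ∩ frontier (fanSupport v S),
      MvPolynomial.eval (fun k => ((x k : ℝ) : ℂ)) (f J) = 0)
    -- `P` represents the rational sum defining `∫ f`
    (P : MvPolynomial (Fin r) ℂ)
    (hP : ∀ x : Fin r → ℂ,
      (∀ J ∈ S.filter (fun J => J.card = r), ∀ i ∈ J, u i J x ≠ 0) →
      ∑ J ∈ S.filter (fun J => J.card = r),
        ((Vol J : ℂ))⁻¹ * MvPolynomial.eval x (f J) * ∏ i ∈ J, (u i J x)⁻¹ =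
        MvPolynomial.eval x P) :
    -- (1) `∫ (f ∘ λ) = λ^r ∫ f`
    (∀ lam : ℂ, lam ≠ 0 → ∀ Q : MvPolynomial (Fin r) ℂ,
      (∀ x : Fin r → ℂ,
        (∀ J ∈ S.filter (fun J => J.card = r), ∀ i ∈ J, u i J x ≠ 0) →
        ∑ J ∈ S.filter (fun J => J.card = r),
          ((Vol J : ℂ))⁻¹ * MvPolynomial.eval (fun k => lam * x k) (f J) *
            ∏ i ∈ J, (u i J x)⁻¹ =
          MvPolynomial.eval x Q) →
      MvPolynomial.eval (0 : Fin r → ℂ) Q =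
        lam ^ r * MvPolynomial.eval (0 : Fin r → ℂ) P) ∧
    -- (2) `∫` vanishes on homogeneous components of degree `d ≠ r`
    (∀ d : ℕ, d ≠ r → (∀ J ∈ S.filter (fun J => J.card = r), (f J).IsHomogeneous d) →
      MvPolynomial.eval (0 : Fin r → ℂ) P = 0) := by

  classical
  set F := S.filter (fun J => J.card = r) with hF
  set up : Fin n → Finset (Fin n) → MvPolynomial (Fin r) ℂ :=
    fun i J => ∑ k, MvPolynomial.C (u i J (Pi.single k 1)) * MvPolynomial.X k with hup_def
  have hup : ∀ i J x, MvPolynomial.eval x (up i J) = u i J x := fun i J x => lin_poly_eval _ x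
  set g : MvPolynomial (Fin r) ℂ := ∏ J ∈ F, ∏ i ∈ J.attach, up i.1 J with hg_def
  have hgx : ∀ x : Fin r → ℂ, MvPolynomial.eval x g ≠ 0 ↔ ∀ J ∈ F, ∀ i ∈ J, u i J x ≠ 0 := by
    intro x
    rw [hg_def, map_prod, Finset.prod_ne_zero_iff]
    constructor
    · intro h J hJ i hi
      have := h J hJ
      rw [map_prod, Finset.prod_ne_zero_iff] at this
      have := this ⟨i, hi⟩ (Finset.mem_attach _ _)
      rwa [hup] at this
    · intro h J hJ
      rw [map_prod, Finset.prod_ne_zero_iff]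
      intro i _
      rw [hup]
      exact h J hJ i.1 i.2
  have hgne : g ≠ 0 := by
    rw [hg_def]
    rw [Finset.prod_ne_zero_iff]
    intro J hJ
    rw [Finset.prod_ne_zero_iff]
    intro i _
    intro hzero
    have hJS : J ∈ S := (Finset.mem_filter.mp hJ).1
    have hJc : J.card = r := (Finset.mem_filter.mp hJ).2
    have h1 := hu J hJS hJc i.1 i.2 i.1 i.2
    simp only [if_pos rfl] at h1
    have := hup i.1 J (fun k => ((v i.1 k : ℝ) : ℂ))
    rw [hzero] at this
    simp only [map_zero] at this
    rw [← this] at h1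
    exact zero_ne_one h1
  have part1 : ∀ lam : ℂ, lam ≠ 0 → ∀ Q : MvPolynomial (Fin r) ℂ,
      (∀ x : Fin r → ℂ,
        (∀ J ∈ S.filter (fun J => J.card = r), ∀ i ∈ J, u i J x ≠ 0) →
        ∑ J ∈ S.filter (fun J => J.card = r),
          ((Vol J : ℂ))⁻¹ * MvPolynomial.eval (fun k => lam * x k) (f J) *
            ∏ i ∈ J, (u i J x)⁻¹ =
          MvPolynomial.eval x Q) →
      MvPolynomial.eval (0 : Fin r → ℂ) Q =
        lam ^ r * MvPolynomial.eval (0 : Fin r → ℂ) P := by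
    intro lam hlam Q hQ
    set R : MvPolynomial (Fin r) ℂ :=
      MvPolynomial.eval₂ MvPolynomial.C (fun k => MvPolynomial.C lam * MvPolynomial.X k) P
      with hR_def
    have hRx : ∀ x : Fin r → ℂ,
        MvPolynomial.eval x R = MvPolynomial.eval (fun k => lam * x k) P := by
      intro x
      rw [hR_def, MvPolynomial.eval_eval₂]
      have h1 : ((MvPolynomial.eval x).comp (MvPolynomial.C (σ := Fin r))) = RingHom.id ℂ := by
        ext a; simp
      rw [h1, MvPolynomial.eval₂_id]
      have harg : (fun s => MvPolynomial.eval x (MvPolynomial.C lam * MvPolynomial.X s))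
          = fun k => lam * x k := by funext k; simp
      rw [harg]
    have hz : (Q - MvPolynomial.C (lam ^ r) * R) * g = 0 := by
      refine MvPolynomial.funext fun x => ?_
      by_cases hx : MvPolynomial.eval x g = 0
      · simp [hx]
      · have hne := (hgx x).mp hx
        have hlx : ∀ J ∈ F, ∀ i ∈ J, u i J (fun k => lam * x k) ≠ 0 := by
          intro J hJ i hi
          have hsm : (fun k => lam * x k) = lam • x := rfl
          rw [hsm, map_smul, smul_eq_mul]
          exact mul_ne_zero hlam (hne J hJ i hi)
        have h1 := hQ x hne
        have h2 := hP (fun k => lam * x k) hlx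
        have h3 : ∑ J ∈ F, ((Vol J : ℂ))⁻¹ *
              MvPolynomial.eval (fun k => lam * x k) (f J) *
              ∏ i ∈ J, (u i J (fun k => lam * x k))⁻¹
            = (lam ^ r)⁻¹ * ∑ J ∈ F, ((Vol J : ℂ))⁻¹ *
              MvPolynomial.eval (fun k => lam * x k) (f J) * ∏ i ∈ J, (u i J x)⁻¹ := by
          rw [Finset.mul_sum]
          refine Finset.sum_congr rfl fun J hJ => ?_
          have hcard : J.card = r := (Finset.mem_filter.mp hJ).2
          have hprod : ∏ i ∈ J, (u i J (fun k => lam * x k))⁻¹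
              = (lam ^ r)⁻¹ * ∏ i ∈ J, (u i J x)⁻¹ := by
            have hterm : ∀ i ∈ J, (u i J (fun k => lam * x k))⁻¹ = lam⁻¹ * (u i J x)⁻¹ := by
              intro i hi
              have hsm : (fun k => lam * x k) = lam • x := rfl
              rw [hsm, map_smul, smul_eq_mul, mul_inv]
            rw [Finset.prod_congr rfl hterm, Finset.prod_mul_distrib, Finset.prod_const, hcard,
              inv_pow]
          rw [hprod]; ring
        have h4 : MvPolynomial.eval x Q = lam ^ r * MvPolynomial.eval x R := by
          rw [hRx, ← h2, ← h1, h3, ← mul_assoc, mul_inv_cancel₀ (pow_ne_zero r hlam), one_mul]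
        simp [h4]
    rcases mul_eq_zero.mp hz with h | h
    · have hQR : Q = MvPolynomial.C (lam ^ r) * R := by
        have := sub_eq_zero.mp h
        exact this
      rw [hQR]
      simp only [map_mul, MvPolynomial.eval_C]
      congr 1
      rw [hRx]
      have harg : (fun k => lam * (0 : Fin r → ℂ) k) = (0 : Fin r → ℂ) := by
        funext k; simp
      rw [harg]
    · exact absurd h hgne
  refine ⟨part1, ?_⟩
  intro d hd hhom
  have h2 := part1 2 two_ne_zero (MvPolynomial.C ((2 : ℂ) ^ d) * P) ?_
  · rw [map_mul, MvPolynomial.eval_C] at h2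
    have hne : (2 : ℂ) ^ d ≠ 2 ^ r := by
      intro h
      apply hd
      have hcast : (((2 ^ d : ℕ) : ℂ)) = ((2 ^ r : ℕ) : ℂ) := by push_cast; exact h
      exact Nat.pow_right_injective le_rfl (Nat.cast_injective hcast)
    have := sub_eq_zero.mpr h2
    rw [← sub_mul] at this
    rcases mul_eq_zero.mp this with h | h
    · exact absurd (sub_eq_zero.mp h) hne
    · exact h
  · intro x hx
    rw [map_mul, MvPolynomial.eval_C, ← hP x hx, Finset.mul_sum]
    refine Finset.sum_congr rfl fun J hJ => ?_
    rw [homog_eval_mul (hhom J hJ) 2 x]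
    ring
end

section
/- For the cone C ⊂ ℤ² generated by v_1=(0,1), v_2=(1,1), v_3=(3,1) with the fan Σ having maximal cones {1,2} and {2,3}, the K-theory ring K_0(ℙ_Σ) = ℂ[R_1^{±1},R_2^{±1},R_3^{±1}]/⟨(1−R_1)(1−R_3), R_1R_2R_3−1, R_2R_3³−1⟩ is isomorphic to ℂ[R_3^{±1}]/⟨(1−R_3)²(1+R_3)⟩, and this ring is 3-dimensional over ℂ with basis 1, R_3, R_3². -/
open scoped LaurentPolynomial

/-- The ring of Laurent polynomials `ℂ[R₁^{±1}, R₂^{±1}, R₃^{±1}]`, modelled as the group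
algebra of `ℤ³`. -/
noncomputable abbrev Laurent3 := AddMonoidAlgebra ℂ (Fin 3 →₀ ℤ)

/-- The Laurent monomial `Rᵢ`. -/
noncomputable def Rvar (i : Fin 3) : Laurent3 :=
  AddMonoidAlgebra.single (Finsupp.single i 1) 1

/-- The defining ideal `⟨(1−R₁)(1−R₃), R₁R₂R₃−1, R₂R₃³−1⟩` of `K₀(ℙ_Σ)` for
`v₁=(0,1)`, `v₂=(1,1)`, `v₃=(3,1)`, `Σ = {{1,2},{2,3}}`. -/
noncomputable def idealK6 : Ideal Laurent3 :=
  Ideal.span {(1 - Rvar 0) * (1 - Rvar 2), Rvar 0 * Rvar 1 * Rvar 2 - 1,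
    Rvar 1 * Rvar 2 ^ 3 - 1}

/-- The target ideal `⟨(1−R₃)²(1+R₃)⟩` of `ℂ[R₃^{±1}]`. -/
noncomputable def idealT6 : Ideal (LaurentPolynomial ℂ) :=
  Ideal.span {(1 - LaurentPolynomial.T 1) ^ 2 * (1 + LaurentPolynomial.T 1)}

/-!
Modulo the relations `R₁R₂R₃ = 1` and `R₂R₃³ = 1` one has `R₁ = R₃²` and `R₂ = R₃⁻³`, so the
substitution `(R₁, R₂, R₃) ↦ (T², T⁻³, T)` and the inclusion `T ↦ R₃` are mutually inverse modulo
the two ideals, the Stanley–Reisner relation `(1 − R₁)(1 − R₃)` becoming `(1 − T)²(1 + T)`.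
Since this cubic is monic with unit constant term, `T` is already invertible in
`ℂ[T] ⧸ ((1 − T)²(1 + T))`, so inverting it changes nothing and the power basis `1, T, T²` of
`AdjoinRoot` transfers to the Laurent quotient.
-/

open Polynomial LaurentPolynomial

def Ideal.quotientEquivAlgOfInverseMod {R A B : Type*} [CommSemiring R] [CommRing A]
    [CommRing B] [Algebra R A] [Algebra R B] {I : Ideal A} {J : Ideal B} (f : A →ₐ[R] B)
    (g : B →ₐ[R] A) (hf : I ≤ J.comap f) (hg : J ≤ I.comap g)
    (hgf : (Ideal.Quotient.mkₐ R I).comp (g.comp f) = Ideal.Quotient.mkₐ R I)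
    (hfg : (Ideal.Quotient.mkₐ R J).comp (f.comp g) = Ideal.Quotient.mkₐ R J) :
    (A ⧸ I) ≃ₐ[R] (B ⧸ J) :=
  AlgEquiv.ofAlgHom (Ideal.quotientMapₐ J f hf) (Ideal.quotientMapₐ I g hg)
    (Ideal.Quotient.algHom_ext R hfg) (Ideal.Quotient.algHom_ext R hgf)

theorem AddMonoidAlgebra.algHom_ext_single_single {σ R A : Type*} [CommSemiring R] [Semiring A]
    [Algebra R A] ⦃f g : AddMonoidAlgebra R (σ →₀ ℤ) →ₐ[R] A⦄
    (h : ∀ i, f (single (Finsupp.single i 1) 1) = g (single (Finsupp.single i 1) 1)) : f = g :=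
  AddMonoidAlgebra.algHom_ext' (Finsupp.mulHom_ext' fun i => MonoidHom.ext_mint (h i))
    (Subsingleton.elim _ _)

namespace LaurentPolynomial

section Lift

variable {R A : Type*} [CommSemiring R] [Semiring A] [Algebra R A]

theorem algHom_ext ⦃f g : R[T;T⁻¹] →ₐ[R] A⦄ (h : f (T 1) = g (T 1)) : f = g :=
  AddMonoidAlgebra.algHom_ext' (MonoidHom.ext_mint h) (Subsingleton.elim _ _)

noncomputable def liftUnit (u : Aˣ) : R[T;T⁻¹] →ₐ[R] A :=
  AddMonoidAlgebra.lift R A ℤ ((Units.coeHom A).comp (zpowersHom Aˣ u))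

theorem liftUnit_T (u : Aˣ) (n : ℤ) : liftUnit u (T n : R[T;T⁻¹]) = ↑(u ^ n) := by
  rw [liftUnit, T, AddMonoidAlgebra.lift_single, one_smul]
  rfl

theorem liftUnit_toLaurent (u : Aˣ) (p : R[X]) : liftUnit u (toLaurent p) = aeval (u : A) p := by
  rw [← toLaurentAlg_apply, ← AlgHom.comp_apply]
  congr 1
  refine Polynomial.algHom_ext ?_
  simp [liftUnit_T]

theorem toLaurent_eq_aeval_T (p : R[X]) : toLaurent p = aeval (T 1 : R[T;T⁻¹]) p := by
  rw [← toLaurent_X, ← toLaurentAlg_apply, ← toLaurentAlg_apply, aeval_algHom_apply,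
    aeval_X_left_apply]

end Lift

variable {R : Type*} [CommRing R] {p : R[X]}

noncomputable def quotientSpanToLaurentToAdjoinRoot (hp : IsUnit (AdjoinRoot.root p)) :
    (R[T;T⁻¹] ⧸ Ideal.span {toLaurent p}) →ₐ[R] AdjoinRoot p :=
  Ideal.Quotient.liftₐ _ (liftUnit hp.unit) fun a ha => by
    obtain ⟨c, rfl⟩ := Ideal.mem_span_singleton'.1 ha
    rw [map_mul, liftUnit_toLaurent, IsUnit.unit_spec, AdjoinRoot.aeval_eq, AdjoinRoot.mk_self,
      mul_zero]

theorem quotientSpanToLaurentToAdjoinRoot_mk_T (hp : IsUnit (AdjoinRoot.root p)) :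
    quotientSpanToLaurentToAdjoinRoot hp (Ideal.Quotient.mk _ (T 1)) = AdjoinRoot.root p := by
  rw [← Ideal.Quotient.mkₐ_eq_mk R, ← AlgHom.comp_apply, quotientSpanToLaurentToAdjoinRoot,
    Ideal.Quotient.liftₐ_comp, liftUnit_T, zpow_one, IsUnit.unit_spec]

noncomputable def adjoinRootToQuotientSpanToLaurent (p : R[X]) :
    AdjoinRoot p →ₐ[R] R[T;T⁻¹] ⧸ Ideal.span {toLaurent p} :=
  AdjoinRoot.liftAlgHom p (Algebra.ofId R _) (Ideal.Quotient.mk _ (T 1)) <| by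
    change aeval (Ideal.Quotient.mkₐ R _ (T 1)) p = 0
    rw [aeval_algHom_apply, ← toLaurent_eq_aeval_T, Ideal.Quotient.mkₐ_eq_mk,
      Ideal.Quotient.eq_zero_iff_mem]
    exact Ideal.subset_span rfl

theorem adjoinRootToQuotientSpanToLaurent_root (p : R[X]) :
    adjoinRootToQuotientSpanToLaurent p (AdjoinRoot.root p) = Ideal.Quotient.mk _ (T 1) :=
  AdjoinRoot.liftAlgHom_root ..

noncomputable def quotientSpanToLaurentEquiv (hp : IsUnit (AdjoinRoot.root p)) :
    (R[T;T⁻¹] ⧸ Ideal.span {toLaurent p}) ≃ₐ[R] AdjoinRoot p :=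
  AlgEquiv.ofAlgHom (quotientSpanToLaurentToAdjoinRoot hp) (adjoinRootToQuotientSpanToLaurent p)
    (AdjoinRoot.algHom_ext (by simp [adjoinRootToQuotientSpanToLaurent_root,
      quotientSpanToLaurentToAdjoinRoot_mk_T]))
    (Ideal.Quotient.algHom_ext R (algHom_ext (by simp [adjoinRootToQuotientSpanToLaurent_root,
      quotientSpanToLaurentToAdjoinRoot_mk_T])))

noncomputable def quotientSpanToLaurentPowerBasis (hm : p.Monic)
    (hp : IsUnit (AdjoinRoot.root p)) : PowerBasis R (R[T;T⁻¹] ⧸ Ideal.span {toLaurent p}) :=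
  (AdjoinRoot.powerBasis' hm).map (quotientSpanToLaurentEquiv hp).symm

theorem quotientSpanToLaurentPowerBasis_gen (hm : p.Monic) (hp : IsUnit (AdjoinRoot.root p)) :
    (quotientSpanToLaurentPowerBasis hm hp).gen = Ideal.Quotient.mk _ (T 1) := by
  simp [quotientSpanToLaurentPowerBasis, quotientSpanToLaurentEquiv,
    adjoinRootToQuotientSpanToLaurent_root]

theorem quotientSpanToLaurentPowerBasis_dim (hm : p.Monic) (hp : IsUnit (AdjoinRoot.root p)) :
    (quotientSpanToLaurentPowerBasis hm hp).dim = p.natDegree := by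
  simp [quotientSpanToLaurentPowerBasis]

end LaurentPolynomial

/-- `R₁ ↦ T², R₂ ↦ T⁻³, R₃ ↦ T` solves `R₁R₂R₃ = 1` and `R₂R₃³ = 1`. -/
noncomputable def exponentK6 : (Fin 3 →₀ ℤ) →+ ℤ :=
  2 • Finsupp.applyAddHom 0 - 3 • Finsupp.applyAddHom 1 + Finsupp.applyAddHom 2

noncomputable def substK6 : Laurent3 →ₐ[ℂ] ℂ[T;T⁻¹] :=
  AddMonoidAlgebra.mapDomainAlgHom ℂ ℂ exponentK6

noncomputable def embedR3 : ℂ[T;T⁻¹] →ₐ[ℂ] Laurent3 :=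
  AddMonoidAlgebra.mapDomainAlgHom ℂ ℂ (Finsupp.singleAddHom 2)

theorem substK6_Rvar (i : Fin 3) : substK6 (Rvar i) = T (exponentK6 (Finsupp.single i 1)) := by
  rw [substK6, AddMonoidAlgebra.mapDomainAlgHom_apply, Rvar, AddMonoidAlgebra.mapDomain_single, T]

theorem substK6_Rvar_zero : substK6 (Rvar 0) = T 1 ^ 2 := by
  simp [substK6_Rvar, exponentK6, T_pow]

theorem substK6_Rvar_one : substK6 (Rvar 1) = T (-3) := by simp [substK6_Rvar, exponentK6]

theorem substK6_Rvar_two : substK6 (Rvar 2) = T 1 := by simp [substK6_Rvar, exponentK6]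

theorem embedR3_T_one : embedR3 (T 1) = Rvar 2 := by
  rw [embedR3, AddMonoidAlgebra.mapDomainAlgHom_apply, T, AddMonoidAlgebra.mapDomain_single]
  rfl

theorem substK6_comp_embedR3 : substK6.comp embedR3 = AlgHom.id ℂ ℂ[T;T⁻¹] :=
  LaurentPolynomial.algHom_ext (by rw [AlgHom.comp_apply, embedR3_T_one, substK6_Rvar_two]; rfl)

section K6Quotient

local notation "ρ" i => Ideal.Quotient.mk idealK6 (Rvar i)

theorem mk_idealK6_generator {x : Laurent3}
    (hx : x ∈ ({(1 - Rvar 0) * (1 - Rvar 2), Rvar 0 * Rvar 1 * Rvar 2 - 1,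
      Rvar 1 * Rvar 2 ^ 3 - 1} : Set Laurent3)) :
    Ideal.Quotient.mk idealK6 x = 0 :=
  Ideal.Quotient.eq_zero_iff_mem.2 (Ideal.subset_span hx)

theorem mk_Rvar_one_mul_pow_three : (ρ 1) * (ρ 2) ^ 3 = 1 := by
  simpa [sub_eq_zero] using mk_idealK6_generator (.inr (.inr rfl))

theorem mk_Rvar_zero : (ρ 0) = (ρ 2) ^ 2 := by
  have h012 : (ρ 0) * (ρ 1) * (ρ 2) = 1 := by
    simpa [sub_eq_zero] using mk_idealK6_generator (.inr (.inl rfl))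
  linear_combination (ρ 2) ^ 2 * h012 - (ρ 0) * mk_Rvar_one_mul_pow_three

theorem mk_idealK6_cubic : (1 - (ρ 2)) ^ 2 * (1 + (ρ 2)) = 0 := by
  have h02 : (1 - (ρ 0)) * (1 - (ρ 2)) = 0 := by simpa using mk_idealK6_generator (.inl rfl)
  rw [mk_Rvar_zero] at h02
  linear_combination h02

theorem mkₐ_comp_embedR3_comp_substK6 :
    (Ideal.Quotient.mkₐ ℂ idealK6).comp (embedR3.comp substK6) = Ideal.Quotient.mkₐ ℂ idealK6 := by
  refine AddMonoidAlgebra.algHom_ext_single_single fun i => ?_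
  change Ideal.Quotient.mk idealK6 (embedR3 (substK6 (Rvar i))) = ρ i
  match i with
  | 0 => rw [substK6_Rvar_zero, map_pow, embedR3_T_one, map_pow, mk_Rvar_zero]
  | 1 =>
    have hinv : embedR3 (T (-3)) * Rvar 2 ^ 3 = 1 := by
      rw [← embedR3_T_one, ← map_pow, ← map_mul, T_pow, ← T_add]
      norm_num
    set s := Ideal.Quotient.mk idealK6 (embedR3 (T (-3)))
    have hs : s * (ρ 2) ^ 3 = 1 := by
      rw [← map_pow, ← map_mul, hinv, map_one]
    rw [substK6_Rvar_one]
    linear_combination (-s) * mk_Rvar_one_mul_pow_three + (ρ 1) * hs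
  | 2 => rw [substK6_Rvar_two, embedR3_T_one]

end K6Quotient

theorem idealK6_le_comap_substK6 : idealK6 ≤ idealT6.comap substK6 := by
  rw [idealK6, Ideal.span_le]
  rintro x (rfl | rfl | rfl) <;>
    simp only [SetLike.mem_coe, Ideal.mem_comap, map_mul, map_sub, map_one, map_pow,
      substK6_Rvar_zero, substK6_Rvar_one, substK6_Rvar_two]
  · rw [show (1 - T 1 ^ 2) * (1 - T 1) = ((1 - T 1) ^ 2 * (1 + T 1) : ℂ[T;T⁻¹]) by ring]
    exact Ideal.subset_span rfl
  · rw [T_pow, ← T_add, ← T_add]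
    norm_num
  · rw [T_pow, ← T_add]
    norm_num

theorem idealT6_le_comap_embedR3 : idealT6 ≤ idealK6.comap embedR3 := by
  rw [idealT6, Ideal.span_le, Set.singleton_subset_iff, SetLike.mem_coe, Ideal.mem_comap,
    ← Ideal.Quotient.eq_zero_iff_mem]
  simpa [embedR3_T_one] using mk_idealK6_cubic

noncomputable def quotientIdealK6Equiv : (Laurent3 ⧸ idealK6) ≃ₐ[ℂ] (ℂ[T;T⁻¹] ⧸ idealT6) :=
  Ideal.quotientEquivAlgOfInverseMod substK6 embedR3 idealK6_le_comap_substK6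
    idealT6_le_comap_embedR3 mkₐ_comp_embedR3_comp_substK6
    (by rw [substK6_comp_embedR3, AlgHom.comp_id])

noncomputable def polyT6 : ℂ[X] := (1 - X) ^ 2 * (1 + X)

theorem idealT6_eq_span_toLaurent : idealT6 = Ideal.span {toLaurent polyT6} := by
  simp [idealT6, polyT6]

theorem polyT6_eq : polyT6 = (X - Polynomial.C 1) ^ 2 * (X + Polynomial.C 1) := by
  simp only [polyT6, map_one]
  ring

theorem polyT6_monic : polyT6.Monic := by
  rw [polyT6_eq]
  exact ((monic_X_sub_C 1).pow 2).mul (monic_X_add_C 1)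

theorem polyT6_natDegree : polyT6.natDegree = 3 := by
  rw [polyT6_eq]
  compute_degree!

theorem isUnit_root_polyT6 : IsUnit (AdjoinRoot.root polyT6) := by
  set r := AdjoinRoot.root polyT6
  have h : aeval r ((1 - X) ^ 2 * (1 + X) : ℂ[X]) = 0 := by
    rw [AdjoinRoot.aeval_eq]
    exact AdjoinRoot.mk_self
  rw [map_mul, map_pow, map_sub, map_add, map_one, aeval_X] at h
  -- `(1 - r)²(1 + r) = 1 - r (1 + r - r²)`
  exact IsUnit.of_mul_eq_one (1 + r - r ^ 2) (by linear_combination -h)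

/-- for the cone generated by `v₁=(0,1)`, `v₂=(1,1)`, `v₃=(3,1)` with fan `Σ`
having maximal cones `{1,2}` and `{2,3}`, the ring
`K₀(ℙ_Σ) = ℂ[R₁^{±1},R₂^{±1},R₃^{±1}]/⟨(1−R₁)(1−R₃), R₁R₂R₃−1, R₂R₃³−1⟩` is
isomorphic as a ℂ-algebra to `ℂ[R₃^{±1}]/⟨(1−R₃)²(1+R₃)⟩`, and the latter is
3-dimensional over ℂ with basis `1, R₃, R₃²`. -/
theorem stmt6 :
    Nonempty ((Laurent3 ⧸ idealK6) ≃ₐ[ℂ] (LaurentPolynomial ℂ ⧸ idealT6)) ∧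
    Module.finrank ℂ (LaurentPolynomial ℂ ⧸ idealT6) = 3 ∧
    ∃ b : Module.Basis (Fin 3) ℂ (LaurentPolynomial ℂ ⧸ idealT6),
      ∀ k : Fin 3,
        b k = (Ideal.Quotient.mk idealT6 (LaurentPolynomial.T 1)) ^ (k : ℕ) := by
  refine ⟨⟨quotientIdealK6Equiv⟩, ?_⟩
  set pb := quotientSpanToLaurentPowerBasis polyT6_monic isUnit_root_polyT6
  have hdim : pb.dim = 3 := by
    rw [quotientSpanToLaurentPowerBasis_dim, polyT6_natDegree]
  rw [idealT6_eq_span_toLaurent]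
  refine ⟨by rw [pb.finrank, hdim], pb.basis.reindex (finCongr hdim), fun k => ?_⟩
  rw [Module.Basis.reindex_apply, pb.basis_eq_pow, quotientSpanToLaurentPowerBasis_gen]
  rfl
end

section
/- Let v_1,…,v_n be lattice points lying on a common affine hyperplane {deg = 1} in a lattice N of rank r. Suppose (Ψ_d)_{d∈C°} is a collection of functions of (x_1,…,x_n) satisfying ∂_i Ψ_d = Ψ_{d+v_i} and ∑_{i=1}^n ⟨m, v_i⟩ x_i ∂_i Ψ_d + ⟨m, d⟩ Ψ_d = 0 for all m ∈ N^∨ and all d in the interior of the cone C generated by the v_i. Then the function ∑_{|I|=r} Vol_I² (∏_{i∈I} x_i) Ψ_{∑_{i∈I} v_i} is constant in (x_1,…,x_n), where Vol_I is the determinant of (v_i)_{i∈I} and the sum runs over r-element subsets I with ∑_{i∈I}v_i ∈ C°. -/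
open scoped BigOperators

/-- The interior of the real cone generated by the lattice vectors `v i`. -/
def intCone {n r : ℕ} (v : Fin n → (Fin r → ℤ)) : Set (Fin r → ℝ) :=
  interior {x | ∃ a : Fin n → ℝ, (∀ i, 0 ≤ a i) ∧
    x = ∑ i, a i • (fun k => (v i k : ℝ))}

/-!
Sum over all maps `f : Fin r → Fin n` instead of subsets: with `d_f = ∑_b v_{f b}`,
`G(x) = ∑_f det(v ∘ f)² (∏_b x_{f b}) Ψ_{d_f}(x)` is `r!` times the Hessian pairing, because
non-injective `f` have determinant `0` and reordering `f` does not change its term. When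
`det(v ∘ f) ≠ 0`, `d_f` lies in `C°`, so both GKZ equations hold at `d_f`.

Differentiating `G` in `x_j` gives a term from the monomial and a term from `Ψ`. For the
Euler equation at `d_f`, take `m` to be the `b`-th row of the adjugate of `v ∘ f`. By Cramer's
rule `⟨m, v_i⟩ = det(v ∘ f[b ↦ i])` and `⟨m, d_f⟩ = det(v ∘ f)`. This turns the monomial term
into `-∑_g det(v ∘ g) (∑_b det(v ∘ g[b ↦ j])) (∏_b x_{g b}) Ψ_{d_g + v_j}`, after the
substitution `g = f[b ↦ i]`. Because every `v_i` has degree `1`,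
`∑_b det(v ∘ g[b ↦ j]) = det(v ∘ g)`, which is Cramer's rule paired with `m₀`. So the monomial
term cancels the `Ψ` term. Since every partial derivative of `G` vanishes, `G` is constant.
-/

open Finset Matrix Function
open scoped Nat

section LinearAlgebra

variable {κ R : Type*} [Fintype κ] [DecidableEq κ] [CommRing R]

theorem adjugate_dotProduct (A : Matrix κ κ R) (b : κ) (w : κ → R) :
    adjugate A b ⬝ᵥ w = (A.updateCol b w).det := by
  rw [← cramer_apply, cramer_eq_adjugate_mulVec]
  rfl

theorem adjugate_dotProduct_mulVec_one (A : Matrix κ κ R) (b : κ) :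
    adjugate A b ⬝ᵥ (A *ᵥ 1) = A.det := by
  change (adjugate A *ᵥ (A *ᵥ 1)) b = A.det
  simp [mulVec_mulVec, adjugate_mul, smul_mulVec]

theorem sum_det_updateCol_eq_det (A : Matrix κ κ R) (m₀ w : κ → R) (hA : m₀ ᵥ* A = 1)
    (hw : m₀ ⬝ᵥ w = 1) : ∑ b, (A.updateCol b w).det = A.det :=
  calc ∑ b, (A.updateCol b w).det = (m₀ ᵥ* A) ⬝ᵥ cramer A w := by
        simp [hA, cramer_apply, dotProduct]
    _ = m₀ ⬝ᵥ (A.det • w) := by rw [← dotProduct_mulVec, mulVec_cramer]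
    _ = A.det := by rw [dotProduct_smul, hw, smul_eq_mul, mul_one]

end LinearAlgebra

section ColumnMatrix

variable {ι κ R : Type*}

def colMat (v : ι → κ → R) (f : κ → ι) : Matrix κ κ R :=
  Matrix.of fun a b => v (f b) a

theorem colMat_update [DecidableEq κ] (v : ι → κ → R) (f : κ → ι) (b : κ) (i : ι) :
    colMat v (update f b i) = (colMat v f).updateCol b (v i) := by
  ext a c
  by_cases h : c = b <;> simp [colMat, update_apply, h]

theorem colMat_mulVec_one [Fintype κ] [NonAssocSemiring R] (v : ι → κ → R) (f : κ → ι) :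
    colMat v f *ᵥ 1 = ∑ b, v (f b) := by
  ext a
  simp [colMat, mulVec, dotProduct, Finset.sum_apply]

theorem det_colMat_eq_zero_of_not_injective [Fintype κ] [DecidableEq κ] [CommRing R]
    (v : ι → κ → R) {f : κ → ι} (hf : ¬ Injective f) : (colMat v f).det = 0 := by
  obtain ⟨a, b, hab, hne⟩ := not_injective_iff.mp hf
  exact det_zero_of_column_eq hne fun k => by simp [colMat, hab]

theorem det_colMat_comp_perm_sq [Fintype κ] [DecidableEq κ] [CommRing R] (v : ι → κ → R)
    (f : κ → ι) (σ : Equiv.Perm κ) :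
    (colMat v (f ∘ σ)).det ^ 2 = (colMat v f).det ^ 2 := by
  have : colMat v (f ∘ σ) = (colMat v f).submatrix id σ := rfl
  rcases Int.units_eq_one_or (Equiv.Perm.sign σ) with h | h <;> simp [this, det_permute', h]

end ColumnMatrix

theorem sum_comp_update_add {κ ι M : Type*} [Fintype κ] [DecidableEq κ] [AddCommMonoid M]
    (w : ι → M) (g : κ → ι) (b : κ) (j : ι) :
    ∑ c, w (update g b j c) + w (g b) = ∑ c, w (g c) + w j := by
  have hupd := sum_update_of_mem (mem_univ b) (w ∘ g) (w j)
  rw [← comp_update] at hupd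
  simp only [Function.comp_apply] at hupd
  rw [hupd, sum_eq_add_sum_sdiff_singleton_of_mem (mem_univ b)]
  abel

theorem prod_erase_comp_update {κ ι M : Type*} [Fintype κ] [DecidableEq κ] [CommMonoid M]
    (w : ι → M) (g : κ → ι) (b : κ) (j : ι) :
    ∏ c ∈ univ.erase b, w (update g b j c) = ∏ c ∈ univ.erase b, w (g c) :=
  prod_congr rfl fun c hc => by rw [update_of_ne (ne_of_mem_erase hc)]

theorem sum_ite_update_eq {ι κ M : Type*} [Fintype ι] [DecidableEq ι] [Fintype κ] [DecidableEq κ]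
    [AddCommMonoid M] (H : (κ → ι) → ι → M) (b : κ) (j : ι) :
    ∑ f, ∑ i, (if f b = j then H f i else 0) = ∑ g, H (update g b j) (g b) := by
  have hswap : Involutive fun p : (κ → ι) × ι => (update p.1 b p.2, p.1 b) := fun p => by simp
  calc ∑ f, ∑ i, (if f b = j then H f i else 0)
      = ∑ p : (κ → ι) × ι, if p.1 b = j then H p.1 p.2 else 0 := (Fintype.sum_prod_type' _).symm
    _ = ∑ p : (κ → ι) × ι, if p.2 = j then H (update p.1 b p.2) (p.1 b) else 0 :=
        Fintype.sum_equiv hswap.toPerm _ _ fun p => by simp [hswap.coe_toPerm]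
    _ = ∑ g, H (update g b j) (g b) := by simp [Fintype.sum_prod_type]

section Symmetrization

variable {ι M : Type*} [Fintype ι] [LinearOrder ι] [AddCommMonoid M] {r : ℕ}

theorem sum_image_eq_factorial_smul (F : (Fin r → ι) → M)
    (hinj : ∀ f, ¬ Injective f → F f = 0) (hperm : ∀ f (σ : Equiv.Perm (Fin r)), F (f ∘ σ) = F f)
    (I : Finset ι) :
    ∑ f with univ.image f = I, F f = if h : I.card = r then r ! • F (I.orderEmbOfFin h) else 0 := by
  split_ifs with h
  · set e := I.orderEmbOfFin h
    have hmem : ∀ f : Fin r → ι, univ.image f = I → ∀ b, f b ∈ I := fun f hf b => by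
      rw [← hf]; exact mem_image_of_mem f (mem_univ b)
    calc ∑ f : Fin r → ι with univ.image f = I, F f = ∑ σ : Equiv.Perm (Fin r), F (⇑e ∘ ⇑σ) := by
          refine (sum_bij (fun (σ : Equiv.Perm (Fin r)) _ => ⇑e ∘ ⇑σ) ?_ ?_ ?_ fun _ _ => rfl).symm
          · intro σ _
            simp [e, image_comp]
          · intro σ _ τ _ hστ
            exact Equiv.ext fun b => e.injective (congrFun hστ b)
          · intro f hf
            have hfI := (mem_filter.mp hf).2
            have hfinj : Set.InjOn f (univ : Finset (Fin r)) :=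
              card_image_iff.mp (by rw [hfI, h, card_univ, Fintype.card_fin])
            let g : Fin r → Fin r := fun b => (I.orderIsoOfFin h).symm ⟨f b, hmem f hfI b⟩
            have hg : Injective g := fun a b hab =>
              hfinj (by simp) (by simp)
                (congrArg Subtype.val ((I.orderIsoOfFin h).symm.injective hab))
            refine ⟨Equiv.ofBijective g (Finite.injective_iff_bijective.mp hg), mem_univ _, ?_⟩
            ext b
            simp [e, g, ← coe_orderIsoOfFin_apply]
      _ = r ! • F e := by simp [hperm, Fintype.card_perm]
  · refine sum_eq_zero fun f hf => hinj f fun hfinj => h ?_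
    rw [← (mem_filter.mp hf).2, card_image_of_injective _ hfinj, card_univ, Fintype.card_fin]

theorem sum_eq_factorial_smul_sum_powersetCard (F : (Fin r → ι) → M)
    (hinj : ∀ f, ¬ Injective f → F f = 0) (hperm : ∀ f (σ : Equiv.Perm (Fin r)), F (f ∘ σ) = F f) :
    ∑ f, F f =
      r ! • ∑ I ∈ powersetCard r univ, if h : I.card = r then F (I.orderEmbOfFin h) else 0 :=
  calc ∑ f, F f = ∑ I : Finset ι, ∑ f with univ.image f = I, F f := (sum_fiberwise _ _ _).symm
    _ = ∑ I : Finset ι, if h : I.card = r then r ! • F (I.orderEmbOfFin h) else 0 :=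
        sum_congr rfl fun I _ => sum_image_eq_factorial_smul F hinj hperm I
    _ = ∑ I ∈ powersetCard r univ, if h : I.card = r then r ! • F (I.orderEmbOfFin h) else 0 :=
        (sum_subset (subset_univ _) fun I _ hI =>
          dif_neg fun h => hI (mem_powersetCard_univ.2 h)).symm
    _ = _ := by simp only [smul_sum, smul_dite, smul_zero]

end Symmetrization

theorem hasDerivAt_prod_update {ι κ : Type*} [DecidableEq ι] [Fintype κ] [DecidableEq κ]
    (x : ι → ℝ) (f : κ → ι) (j : ι) :
    HasDerivAt (fun t => ∏ b, update x j t (f b))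
      (∑ b, if f b = j then ∏ b' ∈ univ.erase b, x (f b') else 0) (x j) := by
  have hcoord : ∀ b, HasDerivAt (fun t => update x j t (f b)) (if f b = j then 1 else 0) (x j) := by
    intro b
    by_cases hb : f b = j
    · simpa [hb] using hasDerivAt_id' (x j)
    · simpa [hb] using hasDerivAt_const (x j) (x (f b))
  simpa [mul_ite] using HasDerivAt.fun_finsetProd (u := univ) fun b _ => hcoord b

theorem eq_of_hasDerivAt_update_eq_zero {ι E : Type*} [Finite ι] [DecidableEq ι]
    [NormedAddCommGroup E] [NormedSpace ℝ E] {F : (ι → ℝ) → E}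
    (hF : ∀ x j, HasDerivAt (fun t => F (update x j t)) 0 (x j)) (x y : ι → ℝ) : F x = F y := by
  have hline : ∀ x j t, F (update x j t) = F x := by
    intro x j t
    have hderiv : ∀ s, HasDerivAt (fun t => F (update x j t)) 0 s := fun s => by
      simpa using hF (update x j s) j
    simpa using is_const_of_deriv_eq_zero (fun s => (hderiv s).differentiableAt)
      (fun s => (hderiv s).deriv) t (x j)
  have : Fintype ι := Fintype.ofFinite ι
  have hpiecewise : ∀ s : Finset ι, F (s.piecewise y x) = F x := by
    intro s
    induction s using Finset.induction_on with
    | empty => rw [piecewise_empty]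
    | insert a s _ ih => rw [piecewise_insert, hline, ih]
  simpa using (hpiecewise univ).symm

section GKZ

variable {n r : ℕ} (v : Fin n → Fin r → ℤ) (Ψ : (Fin r → ℤ) → (Fin n → ℝ) → ℝ)

theorem sum_colMat_mem_intCone (f : Fin r → Fin n) (hf : (colMat v f).det ≠ 0) :
    (fun k => ((∑ b, v (f b)) k : ℝ)) ∈ intCone v := by
  set A : Matrix (Fin r) (Fin r) ℝ := (colMat v f).map (Int.cast)
  have hA : IsUnit A := by
    rw [isUnit_iff_isUnit_det, isUnit_iff_ne_zero, ← Int.cast_det]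
    exact_mod_cast hf
  have hopen : IsOpenMap (mulVecLin A) :=
    (mulVecLin A).isOpenMap_of_finiteDimensional (mulVec_surjective_iff_isUnit.mpr hA)
  have hpos : IsOpen {c : Fin r → ℝ | ∀ b, 0 < c b} := by
    simpa only [Set.ofPred_forall] using
      isOpen_iInter_of_finite fun b => isOpen_lt continuous_const (continuous_apply b)
  refine interior_maximal ?_ (hopen _ hpos) ⟨1, fun _ => one_pos, ?_⟩
  · rintro _ ⟨c, hc, rfl⟩
    refine ⟨fun i => ∑ b with f b = i, c b, fun i => sum_nonneg fun b _ => (hc b).le, ?_⟩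
    calc A *ᵥ c = ∑ b, c b • fun k => (v (f b) k : ℝ) := by
          ext k; simp [A, colMat, mulVec, dotProduct, Finset.sum_apply, mul_comm]
      _ = ∑ i, ∑ b with f b = i, c b • fun k => (v (f b) k : ℝ) := (sum_fiberwise _ _ _).symm
      _ = ∑ i, (∑ b with f b = i, c b) • fun k => (v i k : ℝ) := by
          simp only [sum_smul]
          exact sum_congr rfl fun i _ => sum_congr rfl fun b hb => by rw [(mem_filter.mp hb).2]
  · ext k
    simp [A, colMat, mulVec, dotProduct, Finset.sum_apply]

def ShiftEquations : Prop :=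
  ∀ d : Fin r → ℤ, (fun k => (d k : ℝ)) ∈ intCone v → ∀ i x,
    HasDerivAt (fun t => Ψ d (update x i t)) (Ψ (d + v i) x) (x i)

def EulerEquations : Prop :=
  ∀ d : Fin r → ℤ, (fun k => (d k : ℝ)) ∈ intCone v → ∀ (m : Fin r → ℤ) x,
    (∑ i, ((∑ k, m k * v i k : ℤ) : ℝ) * x i * Ψ (d + v i) x) +
      ((∑ k, m k * d k : ℤ) : ℝ) * Ψ d x = 0

def pairingTerm (x : Fin n → ℝ) (f : Fin r → Fin n) : ℝ :=
  ((colMat v f).det : ℝ) ^ 2 * (∏ b, x (f b)) * Ψ (∑ b, v (f b)) x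

def mapsPairing (x : Fin n → ℝ) : ℝ :=
  ∑ f, pairingTerm v Ψ x f

def hessianPairing (x : Fin n → ℝ) : ℝ :=
  ∑ I ∈ Finset.powersetCard r (Finset.univ : Finset (Fin n)),
    if h : I.card = r then
      (Matrix.det (Matrix.of fun a b => ((v (I.orderIsoOfFin h b) : Fin r → ℤ) a : ℝ))) ^ 2 *
        (∏ i ∈ I, x i) * Ψ (∑ i ∈ I, v i) x
    else 0

theorem mapsPairing_eq_factorial_smul (x : Fin n → ℝ) :
    mapsPairing v Ψ x = r ! • hessianPairing v Ψ x := by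
  have hinj : ∀ f, ¬ Injective f → pairingTerm v Ψ x f = 0 := fun f hf => by
    simp [pairingTerm, det_colMat_eq_zero_of_not_injective v hf]
  have hperm : ∀ f (σ : Equiv.Perm (Fin r)), pairingTerm v Ψ x (f ∘ σ) = pairingTerm v Ψ x f :=
    fun f σ => by
      simp only [pairingTerm, ← Int.cast_pow, det_colMat_comp_perm_sq, Function.comp_apply,
        Equiv.prod_comp σ fun b => x (f b), Equiv.sum_comp σ fun b => v (f b)]
  rw [mapsPairing, sum_eq_factorial_smul_sum_powersetCard _ hinj hperm, hessianPairing]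
  refine congrArg _ (sum_congr rfl fun I _ => dite_congr rfl (fun h => ?_) fun _ => rfl)
  have hprod : ∏ i ∈ I, x i = ∏ b, x (I.orderEmbOfFin h b) := by
    conv_lhs => rw [← I.map_orderEmbOfFin_univ h]
    exact prod_map _ _ _
  have hsum : ∑ i ∈ I, v i = ∑ b, v (I.orderEmbOfFin h b) := by
    conv_lhs => rw [← I.map_orderEmbOfFin_univ h]
    exact sum_map _ _ _
  rw [pairingTerm, hprod, hsum, Int.cast_det]
  rfl

theorem sum_det_colMat_update (m0 : Fin r → ℤ) (hdeg : ∀ i, ∑ k, m0 k * v i k = 1)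
    (g : Fin r → Fin n) (j : Fin n) :
    ∑ b, (colMat v (update g b j)).det = (colMat v g).det := by
  simp only [colMat_update]
  exact sum_det_updateCol_eq_det _ m0 _ (funext fun b => hdeg (g b)) (hdeg j)

theorem hasDerivAt_pairingTerm (hder : ShiftEquations v Ψ) (x : Fin n → ℝ) (j : Fin n)
    (f : Fin r → Fin n) :
    HasDerivAt (fun t => pairingTerm v Ψ (update x j t) f)
      (((colMat v f).det : ℝ) ^ 2 *
        ((∑ b, if f b = j then ∏ b' ∈ univ.erase b, x (f b') else 0) * Ψ (∑ b, v (f b)) x +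
          (∏ b, x (f b)) * Ψ (∑ b, v (f b) + v j) x)) (x j) := by
  by_cases hf : (colMat v f).det = 0
  · simpa [pairingTerm, hf] using hasDerivAt_const (x j) (0 : ℝ)
  · have h := ((hasDerivAt_prod_update x f j).mul
      (hder _ (sum_colMat_mem_intCone v f hf) j x)).const_mul (((colMat v f).det : ℝ) ^ 2)
    simpa [pairingTerm, mul_assoc] using h

theorem det_sq_mul_eq_neg_sum_of_euler (hEuler : EulerEquations v Ψ) (x : Fin n → ℝ)
    (f : Fin r → Fin n) (b : Fin r) :
    ((colMat v f).det : ℝ) ^ 2 * Ψ (∑ c, v (f c)) x =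
      -(((colMat v f).det : ℝ) *
        ∑ i, ((colMat v (update f b i)).det : ℝ) * x i * Ψ (∑ c, v (f c) + v i) x) := by
  by_cases hf : (colMat v f).det = 0
  · simp [hf]
  have h := hEuler _ (sum_colMat_mem_intCone v f hf) (adjugate (colMat v f) b) x
  have hcol : ∀ i, ∑ k, adjugate (colMat v f) b k * v i k = (colMat v (update f b i)).det :=
    fun i => by rw [colMat_update, ← adjugate_dotProduct]; rfl
  have hsum : ∑ k, adjugate (colMat v f) b k * (∑ c, v (f c)) k = (colMat v f).det := by
    rw [← colMat_mulVec_one, ← adjugate_dotProduct_mulVec_one]; rfl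
  simp only [hcol, hsum] at h
  linear_combination ((colMat v f).det : ℝ) * h

theorem sum_deriv_pairingTerm_eq_zero (m0 : Fin r → ℤ) (hdeg : ∀ i, ∑ k, m0 k * v i k = 1)
    (hEuler : EulerEquations v Ψ) (x : Fin n → ℝ) (j : Fin n) :
    ∑ f : Fin r → Fin n, ((colMat v f).det : ℝ) ^ 2 *
        ((∑ b, if f b = j then ∏ b' ∈ univ.erase b, x (f b') else 0) * Ψ (∑ b, v (f b)) x +
          (∏ b, x (f b)) * Ψ (∑ b, v (f b) + v j) x) = 0 := by
  set D : (Fin r → Fin n) → ℝ := fun g =>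
    ((colMat v g).det : ℝ) * (∏ b, x (g b)) * Ψ (∑ b, v (g b) + v j) x
  have hmonomial : ∀ b, ∑ f : Fin r → Fin n,
      (if f b = j then ∏ b' ∈ univ.erase b, x (f b') else 0) *
        (((colMat v f).det : ℝ) ^ 2 * Ψ (∑ c, v (f c)) x) =
      -∑ g, ((colMat v (update g b j)).det : ℝ) * D g := by
    intro b
    calc _ = -∑ f : Fin r → Fin n, ∑ i, if f b = j then
            (∏ b' ∈ univ.erase b, x (f b')) * (((colMat v f).det : ℝ) *
              (((colMat v (update f b i)).det : ℝ) * x i * Ψ (∑ c, v (f c) + v i) x)) else 0 := by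
          simp only [det_sq_mul_eq_neg_sum_of_euler v Ψ hEuler x _ b, ← sum_neg_distrib]
          refine sum_congr rfl fun f _ => ?_
          split_ifs <;> simp [mul_sum, sum_neg_distrib]
      _ = -∑ g, ((colMat v (update g b j)).det : ℝ) * D g := by
          rw [sum_ite_update_eq]
          refine congrArg _ (sum_congr rfl fun g _ => ?_)
          rw [update_idem, update_eq_self, sum_comp_update_add, prod_erase_comp_update]
          simp only [D, ← prod_erase_mul _ _ (mem_univ b)]
          ring
  calc _ = ∑ b, ∑ f : Fin r → Fin n,
          (if f b = j then ∏ b' ∈ univ.erase b, x (f b') else 0) *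
            (((colMat v f).det : ℝ) ^ 2 * Ψ (∑ c, v (f c)) x) +
        ∑ g, ((colMat v g).det : ℝ) * D g := by
        rw [sum_comm, ← sum_add_distrib]
        refine sum_congr rfl fun f _ => ?_
        simp only [D, mul_add]
        congr 1
        · rw [sum_mul, mul_sum]
          exact sum_congr rfl fun b _ => by ring
        · ring
    _ = 0 := by
        simp only [hmonomial, sum_neg_distrib, sum_comm (γ := Fin r), ← sum_mul]
        simp [← Int.cast_sum, sum_det_colMat_update v m0 hdeg]

theorem hasDerivAt_mapsPairing (m0 : Fin r → ℤ) (hdeg : ∀ i, ∑ k, m0 k * v i k = 1)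
    (hder : ShiftEquations v Ψ) (hEuler : EulerEquations v Ψ)
    (x : Fin n → ℝ) (j : Fin n) :
    HasDerivAt (fun t => mapsPairing v Ψ (update x j t)) 0 (x j) := by
  have h := HasDerivAt.fun_sum fun f (_ : f ∈ univ) => hasDerivAt_pairingTerm v Ψ hder x j f
  rwa [sum_deriv_pairingTerm_eq_zero v Ψ m0 hdeg hEuler x j] at h

end GKZ

/-- for lattice points `v₁,…,v_n` on a common affine hyperplane `{deg = 1}`
and a solution `(Ψ_d)_{d∈C°}` of the better behaved GKZ system `bbGKZ(C°,0)` (i.e.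
`∂ᵢΨ_d = Ψ_{d+vᵢ}` and `∑ᵢ ⟨m,vᵢ⟩xᵢ∂ᵢΨ_d + ⟨m,d⟩Ψ_d = 0` for all `m ∈ N^∨` and all `d`
in the interior of the cone `C` generated by the `vᵢ`), the Hessian pairing
`∑_{|I|=r} Vol_I² (∏_{i∈I} xᵢ) Ψ_{∑_{i∈I} vᵢ}` is a constant function of `(x₁,…,x_n)`. -/
theorem stmt10 {n r : ℕ} (v : Fin n → (Fin r → ℤ))
    -- the `vᵢ` lie on the hyperplane `{m₀ = 1}`
    (m0 : Fin r → ℤ) (hdeg : ∀ i, ∑ k, m0 k * v i k = 1)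
    (Ψ : (Fin r → ℤ) → (Fin n → ℝ) → ℝ)
    -- `∂ᵢ Ψ_d = Ψ_{d + vᵢ}` for `d ∈ C°`
    (hder : ∀ d : Fin r → ℤ, (fun k => (d k : ℝ)) ∈ intCone v →
      ∀ i : Fin n, ∀ x : Fin n → ℝ,
        HasDerivAt (fun t => Ψ d (Function.update x i t)) (Ψ (d + v i) x) (x i))
    -- `∑ᵢ ⟨m,vᵢ⟩ xᵢ ∂ᵢΨ_d + ⟨m,d⟩ Ψ_d = 0` for `d ∈ C°`
    (hEuler : ∀ d : Fin r → ℤ, (fun k => (d k : ℝ)) ∈ intCone v →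
      ∀ m : Fin r → ℤ, ∀ x : Fin n → ℝ,
        (∑ i, ((∑ k, m k * v i k : ℤ) : ℝ) * x i * Ψ (d + v i) x) +
          ((∑ k, m k * d k : ℤ) : ℝ) * Ψ d x = 0) :
    ∀ x y : Fin n → ℝ,
      (∑ I ∈ Finset.powersetCard r (Finset.univ : Finset (Fin n)),
        if h : I.card = r then
          (Matrix.det (Matrix.of fun a b => ((v (I.orderIsoOfFin h b) : Fin r → ℤ) a : ℝ)))
              ^ 2 *
            (∏ i ∈ I, x i) * Ψ (∑ i ∈ I, v i) x
        else 0) =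
      (∑ I ∈ Finset.powersetCard r (Finset.univ : Finset (Fin n)),
        if h : I.card = r then
          (Matrix.det (Matrix.of fun a b => ((v (I.orderIsoOfFin h b) : Fin r → ℤ) a : ℝ)))
              ^ 2 *
            (∏ i ∈ I, y i) * Ψ (∑ i ∈ I, v i) y
        else 0) := by
  intro x y
  have hconst :=
    eq_of_hasDerivAt_update_eq_zero (hasDerivAt_mapsPairing v Ψ m0 hdeg hder hEuler) x y
  rw [mapsPairing_eq_factorial_smul, mapsPairing_eq_factorial_smul] at hconst
  exact smul_right_injective ℝ (Nat.factorial_ne_zero r) hconst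
end

section
/- Let Φ = (Φ_c)_{c∈C} and Ψ = (Ψ_d)_{d∈C°} be smooth solutions of bbGKZ(C,0) and bbGKZ(C°,0) for v_1=(0,1), v_2=(1,1), v_3=(3,1) in N = ℤ². Then the function ⟨Φ,Ψ⟩ = x_1x_2(Φ_{(0,0)}Ψ_{(1,2)} − Φ_{(0,1)}Ψ_{(1,1)}) + 9x_1x_3(Φ_{(0,0)}Ψ_{(3,2)} − Φ_{(1,1)}Ψ_{(2,1)} − Φ_{(2,1)}Ψ_{(1,1)}) + x_2x_3(4Φ_{(0,0)}Ψ_{(4,2)} − 6Φ_{(2,1)}Ψ_{(2,1)} − 4Φ_{(3,1)}Ψ_{(1,1)}) has vanishing partial derivative with respect to x_2. -/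
/-- Lattice points of the cone `C` generated by `v₁=(0,1)`, `v₂=(1,1)`, `v₃=(3,1)`. -/
def inConeC (a b : ℤ) : Prop := 0 ≤ a ∧ a ≤ 3 * b

/-- Lattice points of the interior `C°`. -/
def inConeCint (a b : ℤ) : Prop := 0 < a ∧ a < 3 * b

/-!
Differentiating `⟨Φ, Ψ⟩` in `x₂` shifts one index of each product by `v₂ = (1,1)` and also
differentiates the monomial coefficients. The resulting expression is a combination of the
Euler equations for `m = (1,0)` and `m = (0,1)` at finitely many lattice points of `C` and `C°`,
with coefficients that are themselves values of `Φ` and `Ψ`.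
-/

/-- The Euler equations for the weights `m = (1,0)` and `m = (0,1)`, with `∂ᵢ` already replaced
by the index shift `c ↦ c + vᵢ`; they span the Euler equations for all `m`. -/
def IsEulerFamily (S : ℤ → ℤ → Prop) (x1 x2 x3 : ℝ) (φ : ℤ → ℤ → ℝ) : Prop :=
  ∀ a b, S a b →
    x2 * φ (a + 1) (b + 1) + 3 * x3 * φ (a + 3) (b + 1) + a * φ a b = 0 ∧
    x1 * φ a (b + 1) + x2 * φ (a + 1) (b + 1) + x3 * φ (a + 3) (b + 1) + b * φ a b = 0

theorem isEulerFamily_of_forall_weights {S : ℤ → ℤ → Prop} {x1 x2 x3 : ℝ} {φ : ℤ → ℤ → ℝ}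
    (h : ∀ m1 m2 a b, S a b →
      ((m2 : ℤ) : ℝ) * x1 * φ a (b + 1) + ((m1 + m2 : ℤ) : ℝ) * x2 * φ (a + 1) (b + 1) +
      ((3 * m1 + m2 : ℤ) : ℝ) * x3 * φ (a + 3) (b + 1) + ((m1 * a + m2 * b : ℤ) : ℝ) * φ a b = 0) :
    IsEulerFamily S x1 x2 x3 φ := by
  intro a b hab
  constructor
  · simpa using h 1 0 a b hab
  · simpa using h 0 1 a b hab

/-- The action of `∂₂` on a bbGKZ solution, `∂₂Φ_c = Φ_{c+v₂}`. -/
def shift₂ (φ : ℤ → ℤ → ℝ) (a b : ℤ) : ℝ := φ (a + 1) (b + 1)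

def bracketX1X2 (φ ψ : ℤ → ℤ → ℝ) : ℝ := φ 0 0 * ψ 1 2 - φ 0 1 * ψ 1 1

def bracketX1X3 (φ ψ : ℤ → ℤ → ℝ) : ℝ := φ 0 0 * ψ 3 2 - φ 1 1 * ψ 2 1 - φ 2 1 * ψ 1 1

def bracketX2X3 (φ ψ : ℤ → ℤ → ℝ) : ℝ :=
  4 * φ 0 0 * ψ 4 2 - 6 * φ 2 1 * ψ 2 1 - 4 * φ 3 1 * ψ 1 1

def pairing (x1 x2 x3 : ℝ) (φ ψ : ℤ → ℤ → ℝ) : ℝ :=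
  x1 * x2 * bracketX1X2 φ ψ + 9 * x1 * x3 * bracketX1X3 φ ψ + x2 * x3 * bracketX2X3 φ ψ

theorem hasDerivAt_pairing {φ ψ : ℝ → ℤ → ℤ → ℝ} {φ' ψ' : ℤ → ℤ → ℝ} {x1 x2 x3 : ℝ}
    (hφ : ∀ a b, inConeC a b → HasDerivAt (fun t => φ t a b) (φ' a b) x2)
    (hψ : ∀ a b, inConeCint a b → HasDerivAt (fun t => ψ t a b) (ψ' a b) x2) :
    HasDerivAt (fun t => pairing x1 t x3 (φ t) (ψ t))
      (x1 * bracketX1X2 (φ x2) (ψ x2) + x3 * bracketX2X3 (φ x2) (ψ x2) +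
        pairing x1 x2 x3 φ' (ψ x2) + pairing x1 x2 x3 (φ x2) ψ') x2 := by
  have φ00 := hφ 0 0 (by norm_num [inConeC])
  have φ01 := hφ 0 1 (by norm_num [inConeC])
  have φ11 := hφ 1 1 (by norm_num [inConeC])
  have φ21 := hφ 2 1 (by norm_num [inConeC])
  have φ31 := hφ 3 1 (by norm_num [inConeC])
  have ψ11 := hψ 1 1 (by norm_num [inConeCint])
  have ψ12 := hψ 1 2 (by norm_num [inConeCint])
  have ψ21 := hψ 2 1 (by norm_num [inConeCint])
  have ψ32 := hψ 3 2 (by norm_num [inConeCint])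
  have ψ42 := hψ 4 2 (by norm_num [inConeCint])
  have h12 := (φ00.mul ψ12).sub (φ01.mul ψ11)
  have h13 := ((φ00.mul ψ32).sub (φ11.mul ψ21)).sub (φ21.mul ψ11)
  have h23 := (((φ00.const_mul 4).mul ψ42).sub ((φ21.const_mul 6).mul ψ21)).sub
    ((φ31.const_mul 4).mul ψ11)
  have hsum := ((((hasDerivAt_id x2).const_mul x1).mul h12).add (h13.const_mul (9 * x1 * x3))).add
    (((hasDerivAt_id x2).mul_const x3).mul h23)
  refine hsum.congr_deriv ?_
  simp only [pairing, bracketX1X2, bracketX1X3, bracketX2X3, Pi.mul_apply, Pi.sub_apply, id_eq]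
  ring

theorem pairing_shift₂_add_eq_zero {x1 x2 x3 : ℝ} {φ ψ : ℤ → ℤ → ℝ}
    (hφ : IsEulerFamily inConeC x1 x2 x3 φ) (hψ : IsEulerFamily inConeCint x1 x2 x3 ψ) :
    x1 * bracketX1X2 φ ψ + x3 * bracketX2X3 φ ψ +
      pairing x1 x2 x3 (shift₂ φ) ψ + pairing x1 x2 x3 φ (shift₂ ψ) = 0 := by
  -- `φab₁`, `φab₂`: the Euler equations at `(a,b)` for `m = (1,0)` and `m = (0,1)`.
  obtain ⟨φ00₁, φ00₂⟩ := hφ 0 0 (by norm_num [inConeC])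
  obtain ⟨φ01₁, -⟩ := hφ 0 1 (by norm_num [inConeC])
  obtain ⟨φ11₁, φ11₂⟩ := hφ 1 1 (by norm_num [inConeC])
  obtain ⟨φ21₁, φ21₂⟩ := hφ 2 1 (by norm_num [inConeC])
  obtain ⟨ψ11₁, ψ11₂⟩ := hψ 1 1 (by norm_num [inConeCint])
  obtain ⟨ψ21₁, ψ21₂⟩ := hψ 2 1 (by norm_num [inConeCint])
  obtain ⟨ψ12₁, -⟩ := hψ 1 2 (by norm_num [inConeCint])
  obtain ⟨ψ22₁, ψ22₂⟩ := hψ 2 2 (by norm_num [inConeCint])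
  norm_num [pairing, bracketX1X2, bracketX1X3, bracketX2X3, shift₂] at *
  linear_combination
    (-2 * ψ 1 1 - (1/2) * x1 * ψ 1 2 - 2 * x2 * ψ 2 2 - 2 * x3 * ψ 4 2) * φ00₁ +
    (2 * ψ 1 1 + (3/2) * x1 * ψ 1 2 + 2 * x2 * ψ 2 2 + 6 * x3 * ψ 4 2) * φ00₂ -
    3 * x1 * ψ 1 1 * φ01₁ - 2 * x2 * ψ 1 1 * φ11₁ + 2 * x2 * ψ 1 1 * φ11₂ +
    3 * x3 * ψ 2 1 * φ21₁ - 9 * x3 * ψ 2 1 * φ21₂ +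
    (2 * φ 0 0 - (3/2) * x1 * φ 0 1) * ψ11₁ - (2 * φ 0 0 + (3/2) * x1 * φ 0 1) * ψ11₂ +
    3 * x3 * φ 2 1 * ψ21₁ - 9 * x3 * φ 2 1 * ψ21₂ + 3 * x1 * φ 0 0 * ψ12₁ +
    2 * x2 * φ 0 0 * ψ22₁ - 2 * x2 * φ 0 0 * ψ22₂

theorem stmt12_general (Φ Ψ : ℤ → ℤ → ℝ → ℝ → ℝ → ℝ)
    (hΦd2 : ∀ a b, inConeC a b → ∀ x1 x2 x3 : ℝ,
      HasDerivAt (fun t => Φ a b x1 t x3) (Φ (a + 1) (b + 1) x1 x2 x3) x2)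
    (hΦE : ∀ m1 m2 a b, inConeC a b → ∀ x1 x2 x3 : ℝ,
      ((m2 : ℤ) : ℝ) * x1 * Φ a (b + 1) x1 x2 x3 +
      ((m1 + m2 : ℤ) : ℝ) * x2 * Φ (a + 1) (b + 1) x1 x2 x3 +
      ((3 * m1 + m2 : ℤ) : ℝ) * x3 * Φ (a + 3) (b + 1) x1 x2 x3 +
      ((m1 * a + m2 * b : ℤ) : ℝ) * Φ a b x1 x2 x3 = 0)
    (hΨd2 : ∀ a b, inConeCint a b → ∀ x1 x2 x3 : ℝ,
      HasDerivAt (fun t => Ψ a b x1 t x3) (Ψ (a + 1) (b + 1) x1 x2 x3) x2)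
    (hΨE : ∀ m1 m2 a b, inConeCint a b → ∀ x1 x2 x3 : ℝ,
      ((m2 : ℤ) : ℝ) * x1 * Ψ a (b + 1) x1 x2 x3 +
      ((m1 + m2 : ℤ) : ℝ) * x2 * Ψ (a + 1) (b + 1) x1 x2 x3 +
      ((3 * m1 + m2 : ℤ) : ℝ) * x3 * Ψ (a + 3) (b + 1) x1 x2 x3 +
      ((m1 * a + m2 * b : ℤ) : ℝ) * Ψ a b x1 x2 x3 = 0) :
    ∀ x1 x2 x3 : ℝ,
      HasDerivAt
        (fun t =>
          x1 * t * (Φ 0 0 x1 t x3 * Ψ 1 2 x1 t x3 - Φ 0 1 x1 t x3 * Ψ 1 1 x1 t x3) +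
          9 * x1 * x3 * (Φ 0 0 x1 t x3 * Ψ 3 2 x1 t x3 - Φ 1 1 x1 t x3 * Ψ 2 1 x1 t x3 -
            Φ 2 1 x1 t x3 * Ψ 1 1 x1 t x3) +
          t * x3 * (4 * Φ 0 0 x1 t x3 * Ψ 4 2 x1 t x3 - 6 * Φ 2 1 x1 t x3 * Ψ 2 1 x1 t x3 -
            4 * Φ 3 1 x1 t x3 * Ψ 1 1 x1 t x3))
        0 x2 := by
  intro x1 x2 x3
  have hderiv := hasDerivAt_pairing (x1 := x1) (x3 := x3)
    (φ := fun t a b => Φ a b x1 t x3) (ψ := fun t a b => Ψ a b x1 t x3)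
    (fun a b h => hΦd2 a b h x1 x2 x3) (fun a b h => hΨd2 a b h x1 x2 x3)
  refine hderiv.congr_deriv (pairing_shift₂_add_eq_zero ?_ ?_)
  · exact isEulerFamily_of_forall_weights fun m1 m2 a b h => hΦE m1 m2 a b h x1 x2 x3
  · exact isEulerFamily_of_forall_weights fun m1 m2 a b h => hΨE m1 m2 a b h x1 x2 x3

/-- for smooth solutions `Φ` of `bbGKZ(C,0)` and `Ψ` of `bbGKZ(C°,0)` for
`v₁=(0,1)`, `v₂=(1,1)`, `v₃=(3,1)`, the function
`⟨Φ,Ψ⟩ = x₁x₂(Φ₍₀,₀₎Ψ₍₁,₂₎ − Φ₍₀,₁₎Ψ₍₁,₁₎) + 9x₁x₃(Φ₍₀,₀₎Ψ₍₃,₂₎ − Φ₍₁,₁₎Ψ₍₂,₁₎ − Φ₍₂,₁₎Ψ₍₁,₁₎)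
 + x₂x₃(4Φ₍₀,₀₎Ψ₍₄,₂₎ − 6Φ₍₂,₁₎Ψ₍₂,₁₎ − 4Φ₍₃,₁₎Ψ₍₁,₁₎)` has vanishing partial derivative
with respect to `x₂`. The hypotheses are `∂ᵢΦ_c = Φ_{c+vᵢ}` for `c ∈ C`, `∂ᵢΨ_d = Ψ_{d+vᵢ}`
for `d ∈ C°`, and the Euler-type equations (with derivatives substituted)
`∑ᵢ ⟨m,vᵢ⟩xᵢΦ_{c+vᵢ} + ⟨m,c⟩Φ_c = 0`, and similarly for `Ψ`. -/
theorem stmt12 (Φ Ψ : ℤ → ℤ → ℝ → ℝ → ℝ → ℝ)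
    (hΦd1 : ∀ a b, inConeC a b → ∀ x1 x2 x3 : ℝ,
      HasDerivAt (fun t => Φ a b t x2 x3) (Φ a (b + 1) x1 x2 x3) x1)
    (hΦd2 : ∀ a b, inConeC a b → ∀ x1 x2 x3 : ℝ,
      HasDerivAt (fun t => Φ a b x1 t x3) (Φ (a + 1) (b + 1) x1 x2 x3) x2)
    (hΦd3 : ∀ a b, inConeC a b → ∀ x1 x2 x3 : ℝ,
      HasDerivAt (fun t => Φ a b x1 x2 t) (Φ (a + 3) (b + 1) x1 x2 x3) x3)
    (hΦE : ∀ m1 m2 a b, inConeC a b → ∀ x1 x2 x3 : ℝ,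
      ((m2 : ℤ) : ℝ) * x1 * Φ a (b + 1) x1 x2 x3 +
      ((m1 + m2 : ℤ) : ℝ) * x2 * Φ (a + 1) (b + 1) x1 x2 x3 +
      ((3 * m1 + m2 : ℤ) : ℝ) * x3 * Φ (a + 3) (b + 1) x1 x2 x3 +
      ((m1 * a + m2 * b : ℤ) : ℝ) * Φ a b x1 x2 x3 = 0)
    (hΨd1 : ∀ a b, inConeCint a b → ∀ x1 x2 x3 : ℝ,
      HasDerivAt (fun t => Ψ a b t x2 x3) (Ψ a (b + 1) x1 x2 x3) x1)
    (hΨd2 : ∀ a b, inConeCint a b → ∀ x1 x2 x3 : ℝ,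
      HasDerivAt (fun t => Ψ a b x1 t x3) (Ψ (a + 1) (b + 1) x1 x2 x3) x2)
    (hΨd3 : ∀ a b, inConeCint a b → ∀ x1 x2 x3 : ℝ,
      HasDerivAt (fun t => Ψ a b x1 x2 t) (Ψ (a + 3) (b + 1) x1 x2 x3) x3)
    (hΨE : ∀ m1 m2 a b, inConeCint a b → ∀ x1 x2 x3 : ℝ,
      ((m2 : ℤ) : ℝ) * x1 * Ψ a (b + 1) x1 x2 x3 +
      ((m1 + m2 : ℤ) : ℝ) * x2 * Ψ (a + 1) (b + 1) x1 x2 x3 +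
      ((3 * m1 + m2 : ℤ) : ℝ) * x3 * Ψ (a + 3) (b + 1) x1 x2 x3 +
      ((m1 * a + m2 * b : ℤ) : ℝ) * Ψ a b x1 x2 x3 = 0) :
    ∀ x1 x2 x3 : ℝ,
      HasDerivAt
        (fun t =>
          x1 * t * (Φ 0 0 x1 t x3 * Ψ 1 2 x1 t x3 - Φ 0 1 x1 t x3 * Ψ 1 1 x1 t x3) +
          9 * x1 * x3 * (Φ 0 0 x1 t x3 * Ψ 3 2 x1 t x3 - Φ 1 1 x1 t x3 * Ψ 2 1 x1 t x3 -
            Φ 2 1 x1 t x3 * Ψ 1 1 x1 t x3) +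
          t * x3 * (4 * Φ 0 0 x1 t x3 * Ψ 4 2 x1 t x3 - 6 * Φ 2 1 x1 t x3 * Ψ 2 1 x1 t x3 -
            4 * Φ 3 1 x1 t x3 * Ψ 1 1 x1 t x3))
        0 x2 :=
  stmt12_general Φ Ψ hΦd2 hΦE hΨd2 hΨE
end
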